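/- arXiv:2103.16475 — 7 statements merged into one kernel-verified Lean document; each statement's English description precedes it below -/
import Mathlib

section
/- Let V be a complex inner product space which is the algebraic span of a family (V_n)_{n∈ℕ} of pairwise orthogonal finite-dimensional subspaces. Let k ≥ 1 be an integer and let A, B be linear operators on V such that A(V_n) ⊆ V_{n−k} for all n (with A(V_n) = {0} when n < k), B(V_n) ⊆ V_{n+k}, and ⟨Bψ, φ⟩ = ⟨ψ, Aφ⟩ for all ψ, φ ∈ V. Suppose there are constants C > 0 and β > 0 such that ‖(AB − BA)ψ‖ ≤ C·(n+1)^β·‖ψ‖ for every n ∈ ℕ and every ψ ∈ V_n. Then for every n ∈ ℕ and ψ ∈ V_n one has ‖Aψ‖ ≤ √(C/(k(β+1)))·(n+1)^{(β+1)/2}·‖ψ‖. -/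
open scoped InnerProductSpace

/-- From a commutator bound to a bound on the lowering mode. -/
theorem stmt_0 {V : Type*} [NormedAddCommGroup V] [InnerProductSpace ℂ V]
    (Vn : ℕ → Submodule ℂ V)
    (horth : ∀ m n : ℕ, m ≠ n → ∀ ψ ∈ Vn m, ∀ φ ∈ Vn n, ⟪ψ, φ⟫_ℂ = 0)
    (hfd : ∀ n : ℕ, FiniteDimensional ℂ (Vn n))
    (hspan : ⨆ n, Vn n = ⊤)
    (k : ℕ) (hk : 1 ≤ k)
    (A B : V →ₗ[ℂ] V)
    (hA : ∀ n : ℕ, k ≤ n → ∀ ψ ∈ Vn n, A ψ ∈ Vn (n - k))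
    (hA0 : ∀ n : ℕ, n < k → ∀ ψ ∈ Vn n, A ψ = 0)
    (hB : ∀ n : ℕ, ∀ ψ ∈ Vn n, B ψ ∈ Vn (n + k))
    (hadj : ∀ ψ φ : V, ⟪B ψ, φ⟫_ℂ = ⟪ψ, A φ⟫_ℂ)
    (C β : ℝ) (hC : 0 < C) (hβ : 0 < β)
    (hcomm : ∀ n : ℕ, ∀ ψ ∈ Vn n,
      ‖A (B ψ) - B (A ψ)‖ ≤ C * ((n : ℝ) + 1) ^ β * ‖ψ‖) :
    ∀ n : ℕ, ∀ ψ ∈ Vn n,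
      ‖A ψ‖ ≤ Real.sqrt (C / (k * (β + 1))) * ((n : ℝ) + 1) ^ ((β + 1) / 2) * ‖ψ‖ := by
  have hkpos : (0:ℝ) < k := by exact_mod_cast hk
  have hβ1 : (0:ℝ) < β + 1 := by linarith
  have hDpos : 0 < C / ((k:ℝ) * (β + 1)) := div_pos hC (by positivity)
  set D : ℝ := C / ((k:ℝ) * (β + 1)) with hD
  set R : ℝ := Real.sqrt D with hR
  have hRpos : 0 < R := Real.sqrt_pos.mpr hDpos
  have hMsq : ∀ j : ℕ, (R * ((j:ℝ)+1) ^ ((β+1)/2))^2 = D * ((j:ℝ)+1) ^ (β+1) := by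
    intro j
    have hj : (0:ℝ) < (j:ℝ) + 1 := by positivity
    rw [mul_pow, hR, Real.sq_sqrt hDpos.le, sq, ← Real.rpow_add hj]
    ring_nf
  -- re⟪φ, ABφ⟫ = ‖Bφ‖², re⟪φ, BAφ⟫ = ‖Aφ‖²
  have h1 : ∀ φ : V, RCLike.re ⟪φ, A (B φ)⟫_ℂ = ‖B φ‖^2 := by
    intro φ
    rw [← hadj φ (B φ)]
    exact inner_self_eq_norm_sq (𝕜 := ℂ) (B φ)
  have h2 : ∀ φ : V, RCLike.re ⟪φ, B (A φ)⟫_ℂ = ‖A φ‖^2 := by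
    intro φ
    rw [inner_re_symm, hadj (A φ) φ]
    exact inner_self_eq_norm_sq (𝕜 := ℂ) (A φ)
  -- ‖Bφ‖² ≤ ‖Aφ‖² + C(m+1)^β ‖φ‖²  for φ ∈ Vn m
  have hBA : ∀ m : ℕ, ∀ φ ∈ Vn m,
      ‖B φ‖^2 ≤ ‖A φ‖^2 + C * ((m:ℝ)+1) ^ β * ‖φ‖^2 := by
    intro m φ hφ
    have h3 : (‖B φ‖^2 - ‖A φ‖^2 : ℝ) = RCLike.re ⟪φ, A (B φ) - B (A φ)⟫_ℂ := by
      rw [inner_sub_right, map_sub, h1, h2]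
    have h4 : RCLike.re ⟪φ, A (B φ) - B (A φ)⟫_ℂ ≤ ‖φ‖ * ‖A (B φ) - B (A φ)‖ := by
      refine (RCLike.re_le_norm _).trans ?_
      exact norm_inner_le_norm _ _
    have h5 := hcomm m φ hφ
    nlinarith [norm_nonneg φ]
  -- ‖Aψ‖² ≤ ‖B(Aψ)‖ ‖ψ‖
  have hAB : ∀ ψ : V, ‖A ψ‖^2 ≤ ‖B (A ψ)‖ * ‖ψ‖ := by
    intro ψ
    have h6 : (‖A ψ‖^2 : ℝ) = RCLike.re ⟪B (A ψ), ψ⟫_ℂ := by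
      rw [hadj]
      exact (inner_self_eq_norm_sq (𝕜 := ℂ) (A ψ)).symm
    rw [h6]
    exact (RCLike.re_le_norm _).trans (norm_inner_le_norm _ _)
  -- Bernoulli: b^(β+1) + (β+1) k b^β ≤ (b+k)^(β+1) for b ≥ 1
  have hkey : ∀ b : ℝ, 1 ≤ b →
      b ^ (β+1) + (β+1) * (k:ℝ) * b ^ β ≤ (b + (k:ℝ)) ^ (β+1) := by
    intro b hb
    have hb0 : (0:ℝ) < b := by linarith
    have hs : (0:ℝ) ≤ (k:ℝ) / b := by positivity
    have hbern := one_add_mul_self_le_rpow_one_add (s := (k:ℝ)/b)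
      (by linarith) (p := β+1) (by linarith)
    have hmul := mul_le_mul_of_nonneg_left hbern
      (Real.rpow_nonneg hb0.le (β+1))
    have he1 : b ^ (β+1) * (1 + (k:ℝ)/b) ^ (β+1) = (b + (k:ℝ)) ^ (β+1) := by
      rw [← Real.mul_rpow hb0.le (by positivity)]
      congr 1
      field_simp
    have he2 : b ^ (β+1) * (1 + (β+1) * ((k:ℝ)/b)) =
        b ^ (β+1) + (β+1) * (k:ℝ) * b ^ β := by
      have hbb : b ^ (β+1) = b ^ β * b := Real.rpow_add_one hb0.ne' β
      rw [mul_add, mul_one, hbb]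
      field_simp
    rw [he1, he2] at hmul
    exact hmul
  -- main induction
  intro n
  induction n using Nat.strong_induction_on with
  | _ n ih =>
    intro ψ hψ
    by_cases hn : n < k
    · rw [hA0 n hn ψ hψ, norm_zero]
      positivity
    · push_neg at hn
      set m := n - k with hm
      have hmk : (m:ℝ) + (k:ℝ) = (n:ℝ) := by
        rw [hm]
        push_cast [Nat.cast_sub hn]
        ring
      have hφ : A ψ ∈ Vn m := hA n hn ψ hψ
      have ihφ : ‖A (A ψ)‖ ≤ R * ((m:ℝ)+1) ^ ((β+1)/2) * ‖A ψ‖ :=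
        ih m (by omega) (A ψ) hφ
      have hB2 : ‖B (A ψ)‖^2 ≤
          (D * ((m:ℝ)+1) ^ (β+1) + C * ((m:ℝ)+1) ^ β) * ‖A ψ‖^2 := by
        calc ‖B (A ψ)‖^2
            ≤ ‖A (A ψ)‖^2 + C * ((m:ℝ)+1) ^ β * ‖A ψ‖^2 := hBA m (A ψ) hφ
          _ ≤ (R * ((m:ℝ)+1) ^ ((β+1)/2))^2 * ‖A ψ‖^2
                + C * ((m:ℝ)+1) ^ β * ‖A ψ‖^2 := by
              have h10 := pow_le_pow_left₀ (norm_nonneg (A (A ψ))) ihφ 2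
              rw [mul_pow] at h10
              linarith
          _ = (D * ((m:ℝ)+1) ^ (β+1) + C * ((m:ℝ)+1) ^ β) * ‖A ψ‖^2 := by
              rw [hMsq m]; ring
      have hstep : D * ((m:ℝ)+1) ^ (β+1) + C * ((m:ℝ)+1) ^ β
          ≤ D * ((n:ℝ)+1) ^ (β+1) := by
        have hb1 : (1:ℝ) ≤ (m:ℝ) + 1 := by
          have h12 : (0:ℝ) ≤ (m:ℝ) := Nat.cast_nonneg m
          linarith
        have hk2 := hkey ((m:ℝ)+1) hb1
        rw [show ((m:ℝ)+1) + (k:ℝ) = (n:ℝ)+1 by linarith] at hk2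
        have hmulD := mul_le_mul_of_nonneg_left hk2 hDpos.le
        have hne : (k:ℝ) * (β + 1) ≠ 0 := by positivity
        have hDk : D * ((β + 1) * (k:ℝ)) = C := by
          rw [hD, mul_comm (β+1) (k:ℝ), div_mul_cancel₀ C hne]
        calc D * ((m:ℝ)+1) ^ (β+1) + C * ((m:ℝ)+1) ^ β
            = D * (((m:ℝ)+1) ^ (β+1) + (β+1) * (k:ℝ) * ((m:ℝ)+1) ^ β) := by
              rw [← hDk]; ring
          _ ≤ D * ((n:ℝ)+1) ^ (β+1) := hmulD
      have hMn0 : (0:ℝ) ≤ R * ((n:ℝ)+1) ^ ((β+1)/2) := by positivity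
      have hB3 : ‖B (A ψ)‖^2 ≤ (R * ((n:ℝ)+1) ^ ((β+1)/2) * ‖A ψ‖)^2 := by
        rw [mul_pow, hMsq n]
        exact hB2.trans (mul_le_mul_of_nonneg_right hstep (by positivity))
      have hB4 : ‖B (A ψ)‖ ≤ R * ((n:ℝ)+1) ^ ((β+1)/2) * ‖A ψ‖ := by
        have h11 := Real.sqrt_le_sqrt hB3
        rwa [Real.sqrt_sq (norm_nonneg _),
          Real.sqrt_sq (mul_nonneg hMn0 (norm_nonneg _))] at h11
      rcases eq_or_lt_of_le (norm_nonneg (A ψ)) with h0 | h0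
      · rw [← h0]
        positivity
      · have h9 : ‖A ψ‖ * ‖A ψ‖ ≤ (R * ((n:ℝ)+1) ^ ((β+1)/2) * ‖ψ‖) * ‖A ψ‖ := by
          calc ‖A ψ‖ * ‖A ψ‖ = ‖A ψ‖^2 := (sq (‖A ψ‖)).symm
            _ ≤ ‖B (A ψ)‖ * ‖ψ‖ := hAB ψ
            _ ≤ (R * ((n:ℝ)+1) ^ ((β+1)/2) * ‖A ψ‖) * ‖ψ‖ :=
                mul_le_mul_of_nonneg_right hB4 (norm_nonneg ψ)
            _ = (R * ((n:ℝ)+1) ^ ((β+1)/2) * ‖ψ‖) * ‖A ψ‖ := by ring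
        exact le_of_mul_le_mul_right h9 h0
end

section
/- Let V, (J_n)_{n∈ℤ}, Ω be the vacuum representation of the U(1)-current algebra and let (L_n)_{n∈ℤ} be the associated Sugawara operators. For every n ∈ ℕ and every Ψ ∈ V with L_0 Ψ = nΨ one has 0 ≤ ⟨Ψ, Σ_{k≥0} L_{−k} L_k Ψ⟩ ≤ (9/4)·n³·‖Ψ‖², where the sum Σ_{k≥0} L_{−k} L_k Ψ has finitely many nonzero terms. -/
open scoped InnerProductSpace

/-- The Sugawara operators `L_n v = (1/2)(Σ_{k>−1} J_{n−k} J_k v + Σ_{k≤−1} J_k J_{n−k} v)`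
associated to a U(1)-current, each sum having finitely many nonzero terms in the
vacuum representation. -/
noncomputable def sugawara {V : Type*} [AddCommGroup V] [Module ℂ V]
    (J : ℤ → Module.End ℂ V) (n : ℤ) (v : V) : V :=
  ((1 : ℂ) / 2) • ∑ᶠ k : ℤ, if -1 < k then J (n - k) (J k v) else J k (J (n - k) v)

namespace Stmt5Aux

open Finset

variable {V : Type*} [NormedAddCommGroup V] [InnerProductSpace ℂ V]

/-- The summand in the Sugawara operator. -/
def trm (J : ℤ → Module.End ℂ V) (p : ℤ) (w : V) (j : ℤ) : V :=
  if -1 < j then J (p - j) (J j w) else J j (J (p - j) w)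

variable (J : ℤ → Module.End ℂ V)

lemma sug_def (p : ℤ) (w : V) :
    sugawara J p w = ((1 : ℂ) / 2) • ∑ᶠ j : ℤ, trm J p w j := rfl

lemma sug_zero (p : ℤ) : sugawara J p (0 : V) = 0 := by
  rw [sug_def]
  have h : ∀ j : ℤ, trm J p (0 : V) j = 0 := by
    intro j; unfold trm; simp
  rw [finsum_congr h, finsum_zero, smul_zero]

/-- Finite-sum form of the Sugawara operator. -/
lemma sug_finset (p M : ℤ) (w : V) (hM : ∀ m : ℤ, M ≤ m → J m w = 0)
    (h1 : 1 ≤ M) (hp : p < M) :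
    sugawara J p w = ((1 : ℂ) / 2) • ∑ j ∈ Icc (p - M) M, trm J p w j := by
  rw [sug_def]
  congr 1
  apply finsum_eq_sum_of_support_subset
  intro j hj
  simp only [Function.mem_support] at hj
  by_contra hjs
  simp only [coe_Icc, Set.mem_Icc, not_and_or, not_le] at hjs
  apply hj
  unfold trm
  rcases hjs with h | h
  · rw [if_neg (by omega), hM (p - j) (by omega), map_zero]
  · rw [if_pos (by omega), hM j (by omega), map_zero]

/-- `L₀` as a concrete finite sum. -/
lemma L0_sum (hJ0 : ∀ v : V, J 0 v = 0)
    (M : ℤ) (h1 : 1 ≤ M) (w : V) (hM : ∀ m : ℤ, M ≤ m → J m w = 0) :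
    sugawara J 0 w = ∑ m ∈ Icc (1 : ℤ) M, J (-m) (J m w) := by
  rw [sug_finset J 0 M w hM h1 (by omega)]
  have hd : Icc (0 - M) M = Icc (0 - M) (-1) ∪ Icc 0 M := by
    ext j; simp only [mem_Icc, mem_union]; omega
  have hdis : Disjoint (Icc (0 - M) (-1)) (Icc (0 : ℤ) M) := by
    rw [Finset.disjoint_left]
    intro a ha ha'
    simp only [mem_Icc] at ha ha'
    omega
  rw [hd, Finset.sum_union hdis]
  have e1 : ∑ j ∈ Icc (0 - M) (-1), trm J 0 w j
      = ∑ m ∈ Icc (1 : ℤ) M, J (-m) (J m w) := by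
    refine Finset.sum_nbij' (i := fun j => -j) (j := fun m => -m) ?_ ?_ ?_ ?_ ?_
    · intro a ha; simp only [mem_Icc] at ha ⊢; omega
    · intro a ha; simp only [mem_Icc] at ha ⊢; omega
    · intro a _; ring
    · intro a _; ring
    · intro a ha
      simp only [mem_Icc] at ha
      unfold trm
      rw [if_neg (by omega), neg_neg, zero_sub]
  have e2 : ∑ j ∈ Icc (0 : ℤ) M, trm J 0 w j
      = ∑ m ∈ Icc (1 : ℤ) M, J (-m) (J m w) := by
    have hins : Icc (0 : ℤ) M = insert 0 (Icc 1 M) := by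
      ext j; simp only [mem_Icc, mem_insert]; omega
    rw [hins, Finset.sum_insert (by simp only [mem_Icc]; omega)]
    have h0 : trm J 0 w 0 = 0 := by
      unfold trm
      rw [if_pos (by omega), hJ0, map_zero]
    rw [h0, zero_add]
    refine Finset.sum_congr rfl fun j hj => ?_
    simp only [mem_Icc] at hj
    unfold trm
    rw [if_pos (by omega), zero_sub]
  rw [e1, e2, ← two_smul ℂ, smul_smul]
  rw [show ((1 : ℂ) / 2 * 2) = 1 from by norm_num, one_smul]

/-- Energy bound. -/
lemma energy_le (hadj : ∀ (m : ℤ) (ψ φ : V), ⟪J m ψ, φ⟫_ℂ = ⟪ψ, J (-m) φ⟫_ℂ)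
    (hJ0 : ∀ v : V, J 0 v = 0)
    (hlf : ∀ v : V, ∃ N : ℤ, ∀ m : ℤ, N ≤ m → J m v = 0)
    (w : V) (c : ℤ) (hc : sugawara J 0 w = (c : ℂ) • w)
    (T : Finset ℤ) (hT : ∀ m ∈ T, 1 ≤ m) :
    ∑ m ∈ T, ‖J m w‖ ^ 2 ≤ (c : ℝ) * ‖w‖ ^ 2 := by
  obtain ⟨M₀, hM₀⟩ := hlf w
  obtain ⟨M, hMa, hM1⟩ : ∃ M : ℤ, M₀ ≤ M ∧ 1 ≤ M :=
    ⟨max M₀ 1, le_max_left _ _, le_max_right _ _⟩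
  have hM : ∀ m : ℤ, M ≤ m → J m w = 0 := fun m hm => hM₀ m (by omega)
  have key : ∑ m ∈ Icc (1 : ℤ) M, ‖J m w‖ ^ 2 = (c : ℝ) * ‖w‖ ^ 2 := by
    have h1 : ⟪w, sugawara J 0 w⟫_ℂ = (c : ℂ) * ((‖w‖ : ℂ)) ^ 2 := by
      rw [hc, inner_smul_right, inner_self_eq_norm_sq_to_K]
      rfl
    have h2 : ⟪w, sugawara J 0 w⟫_ℂ
        = ((∑ m ∈ Icc (1 : ℤ) M, ‖J m w‖ ^ 2 : ℝ) : ℂ) := by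
      rw [L0_sum J hJ0 M hM1 w hM, inner_sum, Complex.ofReal_sum]
      refine Finset.sum_congr rfl fun m _ => ?_
      rw [← hadj m w (J m w), inner_self_eq_norm_sq_to_K]
      norm_cast
    have h3 : (c : ℂ) * ((‖w‖ : ℂ)) ^ 2
        = ((∑ m ∈ Icc (1 : ℤ) M, ‖J m w‖ ^ 2 : ℝ) : ℂ) := h1.symm.trans h2
    have h4 : (c : ℝ) * ‖w‖ ^ 2 = ∑ m ∈ Icc (1 : ℤ) M, ‖J m w‖ ^ 2 := by
      exact_mod_cast h3
    exact h4.symm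
  have hTz : ∑ m ∈ T, ‖J m w‖ ^ 2 ≤ ∑ m ∈ T ∪ Icc 1 M, ‖J m w‖ ^ 2 :=
    Finset.sum_le_sum_of_subset_of_nonneg Finset.subset_union_left
      (fun _ _ _ => by positivity)
  have hTu : ∑ m ∈ T ∪ Icc 1 M, ‖J m w‖ ^ 2 = ∑ m ∈ Icc (1 : ℤ) M, ‖J m w‖ ^ 2 := by
    refine (Finset.sum_subset Finset.subset_union_right fun x hx hnx => ?_).symm
    have hx1 : 1 ≤ x := by
      rcases Finset.mem_union.mp hx with h | h
      · exact hT x h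
      · simp only [mem_Icc] at h; omega
    have hxM : M ≤ x := by
      simp only [mem_Icc, not_and_or, not_le] at hnx
      omega
    rw [hM x hxM]
    simp
  rw [← key, ← hTu]
  exact hTz

/-- Negative eigenvalue of `L₀` implies the vector vanishes. -/
lemma vanish_of_neg (hadj : ∀ (m : ℤ) (ψ φ : V), ⟪J m ψ, φ⟫_ℂ = ⟪ψ, J (-m) φ⟫_ℂ)
    (hJ0 : ∀ v : V, J 0 v = 0)
    (hlf : ∀ v : V, ∃ N : ℤ, ∀ m : ℤ, N ≤ m → J m v = 0)
    (w : V) (c : ℤ) (hc : sugawara J 0 w = (c : ℂ) • w)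
    (hneg : c < 0) : w = 0 := by
  have h0 := energy_le J hadj hJ0 hlf w c hc ∅ (by simp)
  simp only [Finset.sum_empty] at h0
  have hc' : (c : ℝ) < 0 := by exact_mod_cast hneg
  have h2 : ‖w‖ ^ 2 ≤ 0 := by nlinarith [sq_nonneg ‖w‖]
  have h3 : ‖w‖ ^ 2 = 0 := le_antisymm h2 (sq_nonneg _)
  exact norm_eq_zero.mp (pow_eq_zero_iff two_ne_zero |>.mp h3)

/-- Commutation rearranged. -/
lemma comm' (hJJ : ∀ m n : ℤ, ∀ v : V,
      J m (J n v) - J n (J m v) = if m + n = 0 then (m : ℂ) • v else 0)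
    (a b : ℤ) (w : V) :
    J a (J b w) = J b (J a w) + (if a + b = 0 then (a : ℂ) • w else 0) := by
  rw [← hJJ a b w]
  abel

/-- `J b` shifts `L₀`-eigenvalues by `-b`. -/
lemma eigJ (hJJ : ∀ m n : ℤ, ∀ v : V,
      J m (J n v) - J n (J m v) = if m + n = 0 then (m : ℂ) • v else 0)
    (hJ0 : ∀ v : V, J 0 v = 0)
    (hlf : ∀ v : V, ∃ N : ℤ, ∀ m : ℤ, N ≤ m → J m v = 0)
    (w : V) (c : ℤ) (hc : sugawara J 0 w = (c : ℂ) • w) (b : ℤ) :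
    sugawara J 0 (J b w) = ((c - b : ℤ) : ℂ) • J b w := by
  obtain ⟨M₀, hM₀⟩ := hlf w
  obtain ⟨M₁, hM₁⟩ := hlf (J b w)
  obtain ⟨M, hMa, hMbb, hMc⟩ : ∃ M : ℤ, M₀ ≤ M ∧ M₁ ≤ M ∧ |b| + 1 ≤ M :=
    ⟨max (max M₀ M₁) (|b| + 1), le_trans (le_max_left M₀ M₁) (le_max_left _ _),
      le_trans (le_max_right M₀ M₁) (le_max_left _ _), le_max_right _ _⟩
  have hMw : ∀ m : ℤ, M ≤ m → J m w = 0 := fun m hm => hM₀ m (by omega)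
  have hMb : ∀ m : ℤ, M ≤ m → J m (J b w) = 0 := fun m hm => hM₁ m (by omega)
  have habs1 := le_abs_self b
  have habs2 := neg_abs_le b
  have hb1 : b < M := by omega
  have hb2 : -b < M := by omega
  have h1 : (1 : ℤ) ≤ M := by have := abs_nonneg b; omega
  rw [L0_sum J hJ0 M h1 (J b w) hMb]
  have step : ∀ m ∈ Icc (1 : ℤ) M, J (-m) (J m (J b w))
      = J b (J (-m) (J m w))
        + ((if m = -b then ((-b : ℤ) : ℂ) • J b w else 0)
          + (if m = b then (-(b : ℤ) : ℂ) • J b w else 0)) := by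
    intro m hm
    simp only [mem_Icc] at hm
    rw [comm' J hJJ m b w, map_add]
    have e1 : J (-m) (if m + b = 0 then (m : ℂ) • w else 0)
        = (if m = -b then ((-b : ℤ) : ℂ) • J b w else 0) := by
      by_cases h : m + b = 0
      · rw [if_pos h, if_pos (by omega), map_smul]
        have hb : b = -m := by omega
        subst hb
        push_cast
        module
      · rw [if_neg h, if_neg (by omega), map_zero]
    rw [e1, comm' J hJJ (-m) b (J m w)]
    have e2 : (if -m + b = 0 then ((-m : ℤ) : ℂ) • J m w else 0)
        = (if m = b then (-(b : ℤ) : ℂ) • J b w else 0) := by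
      by_cases h : -m + b = 0
      · rw [if_pos h, if_pos (by omega)]
        have hb : b = m := by omega
        subst hb
        push_cast
        module
      · rw [if_neg h, if_neg (by omega)]
    rw [e2]
    abel
  have hsum : ∑ m ∈ Icc (1 : ℤ) M, J (-m) (J m (J b w))
      = ∑ m ∈ Icc (1 : ℤ) M, (J b (J (-m) (J m w))
        + ((if m = -b then ((-b : ℤ) : ℂ) • J b w else 0)
          + (if m = b then (-(b : ℤ) : ℂ) • J b w else 0))) :=
    Finset.sum_congr rfl step
  rw [hsum]
  rw [Finset.sum_add_distrib, Finset.sum_add_distrib]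
  rw [← map_sum, ← L0_sum J hJ0 M h1 w hMw, hc]
  rw [Finset.sum_ite_eq' (Icc (1 : ℤ) M) (-b) (fun _ => ((-b : ℤ) : ℂ) • J b w)]
  rw [Finset.sum_ite_eq' (Icc (1 : ℤ) M) b (fun _ => (-(b : ℤ) : ℂ) • J b w)]
  rw [map_smul]
  rcases lt_trichotomy b 0 with hb | hb | hb
  · rw [if_pos (by simp only [mem_Icc]; omega), if_neg (by simp only [mem_Icc]; omega)]
    push_cast
    module
  · subst hb
    rw [if_neg (by simp only [mem_Icc]; omega), if_neg (by simp only [mem_Icc]; omega)]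
    rw [hJ0 w]
    simp
  · rw [if_neg (by simp only [mem_Icc]; omega), if_pos (by simp only [mem_Icc]; omega)]
    push_cast
    module

/-- Lowering below level 0 kills an eigenvector. -/
lemma lower_vanish (hJJ : ∀ m n : ℤ, ∀ v : V,
      J m (J n v) - J n (J m v) = if m + n = 0 then (m : ℂ) • v else 0)
    (hadj : ∀ (m : ℤ) (ψ φ : V), ⟪J m ψ, φ⟫_ℂ = ⟪ψ, J (-m) φ⟫_ℂ)
    (hJ0 : ∀ v : V, J 0 v = 0)
    (hlf : ∀ v : V, ∃ N : ℤ, ∀ m : ℤ, N ≤ m → J m v = 0)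
    (w : V) (c : ℤ) (hc : sugawara J 0 w = (c : ℂ) • w)
    (b : ℤ) (hb : c < b) : J b w = 0 :=
  vanish_of_neg J hadj hJ0 hlf (J b w) (c - b)
    (eigJ J hJJ hJ0 hlf w c hc b) (by omega)

/-- Adjoint per-term identity. -/
lemma trm_adj (hadj : ∀ (m : ℤ) (ψ φ : V), ⟪J m ψ, φ⟫_ℂ = ⟪ψ, J (-m) φ⟫_ℂ)
    (hJ0 : ∀ v : V, J 0 v = 0)
    (m j : ℤ) (v w : V) :
    ⟪v, trm J m w j⟫_ℂ = ⟪trm J (-m) v (-j), w⟫_ℂ := by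
  have hadj' : ∀ (a : ℤ) (ψ φ : V), ⟪ψ, J a φ⟫_ℂ = ⟪J (-a) ψ, φ⟫_ℂ := by
    intro a ψ φ
    rw [hadj (-a) ψ φ, neg_neg]
  unfold trm
  rcases lt_trichotomy j 0 with hj | hj | hj
  · rw [if_neg (by omega), if_pos (by omega)]
    rw [hadj' j v (J (m - j) w), hadj' (m - j) (J (-j) v) w]
    rw [show -(m - j) = -m - -j from by ring]
  · subst hj
    rw [if_pos (by omega), if_pos (by omega)]
    rw [neg_zero, hJ0 w, hJ0 v, map_zero, map_zero, inner_zero_right, inner_zero_left]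
  · rw [if_pos (by omega), if_neg (by omega)]
    rw [hadj' (m - j) v (J j w), hadj' j (J (-(m - j)) v) w]
    rw [show -(m - j) = -m - -j from by ring]

/-- Adjointness of the Sugawara operators. -/
lemma sug_adj (hadj : ∀ (m : ℤ) (ψ φ : V), ⟪J m ψ, φ⟫_ℂ = ⟪ψ, J (-m) φ⟫_ℂ)
    (hJ0 : ∀ v : V, J 0 v = 0)
    (hlf : ∀ v : V, ∃ N : ℤ, ∀ m : ℤ, N ≤ m → J m v = 0)
    (m : ℤ) (v w : V) :
    ⟪v, sugawara J m w⟫_ℂ = ⟪sugawara J (-m) v, w⟫_ℂ := by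
  obtain ⟨Mv, hMv⟩ := hlf v
  obtain ⟨Mw, hMw⟩ := hlf w
  obtain ⟨M, hMa, hMbb, hMc⟩ : ∃ M : ℤ, Mv ≤ M ∧ Mw ≤ M ∧ |m| + 1 ≤ M :=
    ⟨max (max Mv Mw) (|m| + 1), le_trans (le_max_left Mv Mw) (le_max_left _ _),
      le_trans (le_max_right Mv Mw) (le_max_left _ _), le_max_right _ _⟩
  have hMv' : ∀ r : ℤ, M ≤ r → J r v = 0 := fun r hr => hMv r (by omega)
  have hMw' : ∀ r : ℤ, M ≤ r → J r w = 0 := fun r hr => hMw r (by omega)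
  have habs1 := le_abs_self m
  have habs2 := neg_abs_le m
  have habs3 := abs_nonneg m
  have hm1 : m < M := by omega
  have hm2 : -m < M := by omega
  have h1 : (1 : ℤ) ≤ M := by omega
  obtain ⟨C, hC⟩ : ∃ C : ℤ, C = M + |m| := ⟨M + |m|, rfl⟩
  have hw : sugawara J m w = ((1 : ℂ) / 2) • ∑ j ∈ Icc (-C) C, trm J m w j := by
    rw [sug_finset J m M w hMw' h1 hm1]
    congr 1
    refine Finset.sum_subset (fun x hx => ?_) (fun x hx hnx => ?_)
    · simp only [mem_Icc] at hx ⊢; omega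
    · simp only [mem_Icc, not_and_or, not_le] at hx hnx
      unfold trm
      rcases hnx with h | h
      · rw [if_neg (by omega), hMw' (m - x) (by omega), map_zero]
      · rw [if_pos (by omega), hMw' x (by omega), map_zero]
  have hv : sugawara J (-m) v = ((1 : ℂ) / 2) • ∑ j ∈ Icc (-C) C, trm J (-m) v j := by
    rw [sug_finset J (-m) M v hMv' h1 hm2]
    congr 1
    refine Finset.sum_subset (fun x hx => ?_) (fun x hx hnx => ?_)
    · simp only [mem_Icc] at hx ⊢; omega
    · simp only [mem_Icc, not_and_or, not_le] at hx hnx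
      unfold trm
      rcases hnx with h | h
      · rw [if_neg (by omega), hMv' (-m - x) (by omega), map_zero]
      · rw [if_pos (by omega), hMv' x (by omega), map_zero]
  rw [hw, hv, inner_smul_right, inner_smul_left, inner_sum, sum_inner]
  have hconj : (starRingEnd ℂ) ((1 : ℂ) / 2) = (1 : ℂ) / 2 := by
    rw [show ((1 : ℂ) / 2) = (((1 : ℝ) / 2 : ℝ) : ℂ) from by norm_num, Complex.conj_ofReal]
  rw [hconj]
  congr 1
  refine Finset.sum_nbij' (i := fun j => -j) (j := fun j => -j) ?_ ?_ ?_ ?_ ?_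
  · intro a ha; simp only [mem_Icc] at ha ⊢; omega
  · intro a ha; simp only [mem_Icc] at ha ⊢; omega
  · intro a _; ring
  · intro a _; ring
  · intro a _
    exact trm_adj J hadj hJ0 m a v w

/-- `J 0` vanishes on all of `V`. -/
lemma J0_zero (Ω : V)
    (hJJ : ∀ m n : ℤ, ∀ v : V,
      J m (J n v) - J n (J m v) = if m + n = 0 then (m : ℂ) • v else 0)
    (hΩann : ∀ n : ℤ, 0 ≤ n → J n Ω = 0)
    (hspan : Submodule.span ℂ
      {v : V | ∃ l : List ℕ, (∀ m ∈ l, 1 ≤ m) ∧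
        v = (l.map fun m => J (-(m : ℤ))).prod Ω} = ⊤) :
    ∀ v : V, J 0 v = 0 := by
  have hmono : ∀ l : List ℕ, J 0 ((l.map fun m => J (-(m : ℤ))).prod Ω) = 0 := by
    intro l
    induction l with
    | nil => simpa using hΩann 0 le_rfl
    | cons a t ih =>
      have hsh : ((a :: t).map fun m => J (-(m : ℤ))).prod Ω
          = J (-(a : ℤ)) ((t.map fun m => J (-(m : ℤ))).prod Ω) := by
        show (List.prod (J (-(a : ℤ)) :: List.map (fun m => J (-(m : ℤ))) t)) Ω = _
        rw [List.prod_cons]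
        rfl
      rw [hsh, comm' J hJJ 0 (-(a : ℤ)) ((t.map fun m => J (-(m : ℤ))).prod Ω), ih, map_zero,
        zero_add]
      split <;> simp
  intro v
  have hv : v ∈ Submodule.span ℂ {v : V | ∃ l : List ℕ, (∀ m ∈ l, 1 ≤ m) ∧
      v = (l.map fun m => J (-(m : ℤ))).prod Ω} := by rw [hspan]; trivial
  have hle : Submodule.span ℂ {v : V | ∃ l : List ℕ, (∀ m ∈ l, 1 ≤ m) ∧
      v = (l.map fun m => J (-(m : ℤ))).prod Ω} ≤ LinearMap.ker (J 0) := by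
    rw [Submodule.span_le]
    intro x hx
    obtain ⟨l, -, rfl⟩ := hx
    exact LinearMap.mem_ker.mpr (hmono l)
  exact LinearMap.mem_ker.mp (hle hv)

/-- Splitting of `L_k Ψ` into doubly-lowering and normal-ordered parts, `1 ≤ k ≤ N`. -/
lemma sug_split (hJJ : ∀ m n : ℤ, ∀ v : V,
      J m (J n v) - J n (J m v) = if m + n = 0 then (m : ℂ) • v else 0)
    (hadj : ∀ (m : ℤ) (ψ φ : V), ⟪J m ψ, φ⟫_ℂ = ⟪ψ, J (-m) φ⟫_ℂ)
    (hJ0 : ∀ v : V, J 0 v = 0)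
    (hlf : ∀ v : V, ∃ N : ℤ, ∀ m : ℤ, N ≤ m → J m v = 0)
    (N : ℤ) (Ψ : V) (hΨ : sugawara J 0 Ψ = (N : ℂ) • Ψ)
    (k : ℤ) (hk1 : 1 ≤ k) (hkN : k ≤ N) :
    sugawara J k Ψ = ((1 : ℂ) / 2) • (∑ a ∈ Icc (1 : ℤ) (k - 1), J (k - a) (J a Ψ))
      + ∑ mm ∈ Icc (1 : ℤ) (N - k), J (-mm) (J (k + mm) Ψ) := by
  have hlev : ∀ b : ℤ, N < b → J b Ψ = 0 := fun b hb =>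
    lower_vanish J hJJ hadj hJ0 hlf Ψ N hΨ b hb
  have hM : ∀ m : ℤ, N + 1 ≤ m → J m Ψ = 0 := fun m hm => hlev m (by omega)
  rw [sug_finset J k (N + 1) Ψ hM (by omega) (by omega)]
  have hd : Icc (k - (N + 1)) (N + 1) = Icc (k - (N + 1)) (-1) ∪ Icc 0 (N + 1) := by
    ext j; simp only [mem_Icc, mem_union]; omega
  have hdis : Disjoint (Icc (k - (N + 1)) (-1)) (Icc (0 : ℤ) (N + 1)) := by
    rw [Finset.disjoint_left]
    intro a ha ha'
    simp only [mem_Icc] at ha ha'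
    omega
  rw [hd, Finset.sum_union hdis]
  have eneg : ∑ j ∈ Icc (k - (N + 1)) (-1), trm J k Ψ j
      = ∑ mm ∈ Icc (1 : ℤ) (N - k), J (-mm) (J (k + mm) Ψ) := by
    have e1 : ∑ mm ∈ Icc (1 : ℤ) (N - k), J (-mm) (J (k + mm) Ψ)
        = ∑ mm ∈ Icc (1 : ℤ) (N + 1 - k), J (-mm) (J (k + mm) Ψ) := by
      refine Finset.sum_subset (fun x hx => ?_) (fun x hx hnx => ?_)
      · simp only [mem_Icc] at hx ⊢; omega
      · simp only [mem_Icc, not_and_or, not_le] at hx hnx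
        rw [hlev (k + x) (by omega), map_zero]
    rw [e1]
    refine Finset.sum_nbij' (i := fun j => -j) (j := fun mm => -mm) ?_ ?_ ?_ ?_ ?_
    · intro a ha; simp only [mem_Icc] at ha ⊢; omega
    · intro a ha; simp only [mem_Icc] at ha ⊢; omega
    · intro a _; ring
    · intro a _; ring
    · intro a ha
      simp only [mem_Icc] at ha
      unfold trm
      rw [if_neg (by omega), neg_neg, show k + -a = k - a from by ring]
  have epos : ∑ j ∈ Icc (0 : ℤ) (N + 1), trm J k Ψ j
      = (∑ a ∈ Icc (1 : ℤ) (k - 1), J (k - a) (J a Ψ))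
        + ∑ mm ∈ Icc (1 : ℤ) (N - k), J (-mm) (J (k + mm) Ψ) := by
    have hins : Icc (0 : ℤ) (N + 1)
        = insert 0 (insert k (Icc 1 (k - 1) ∪ Icc (k + 1) (N + 1))) := by
      ext j; simp only [mem_Icc, mem_insert, mem_union]; omega
    rw [hins]
    rw [Finset.sum_insert (by simp only [mem_insert, mem_union, mem_Icc]; omega)]
    rw [Finset.sum_insert (by simp only [mem_union, mem_Icc]; omega)]
    rw [Finset.sum_union (by
      rw [Finset.disjoint_left]
      intro a ha ha'
      simp only [mem_Icc] at ha ha'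
      omega)]
    have h0 : trm J k Ψ 0 = 0 := by
      unfold trm
      rw [if_pos (by omega), hJ0, map_zero]
    have hkk : trm J k Ψ k = 0 := by
      unfold trm
      rw [if_pos (by omega), show k - k = 0 from by ring, hJ0]
    rw [h0, hkk, zero_add, zero_add]
    congr 1
    · refine Finset.sum_congr rfl fun j hj => ?_
      simp only [mem_Icc] at hj
      unfold trm
      rw [if_pos (by omega)]
    · have e1 : ∑ j ∈ Icc (k + 1) (N + 1), trm J k Ψ j
          = ∑ mm ∈ Icc (1 : ℤ) (N + 1 - k), J (-mm) (J (k + mm) Ψ) := by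
        refine Finset.sum_nbij' (i := fun j => j - k) (j := fun mm => mm + k) ?_ ?_ ?_ ?_ ?_
        · intro a ha; simp only [mem_Icc] at ha ⊢; omega
        · intro a ha; simp only [mem_Icc] at ha ⊢; omega
        · intro a _; ring
        · intro a _; ring
        · intro a ha
          simp only [mem_Icc] at ha
          unfold trm
          rw [if_pos (by omega), show k - a = -(a - k) from by ring,
            show k + (a - k) = a from by ring]
      rw [e1]
      refine (Finset.sum_subset (fun x hx => ?_) (fun x hx hnx => ?_)).symm
      · simp only [mem_Icc] at hx ⊢; omega
      · simp only [mem_Icc, not_and_or, not_le] at hx hnx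
        rw [hlev (k + x) (by omega), map_zero]
  rw [eneg, epos]
  module

/-- `L_k Ψ = 0` when `k` exceeds the level. -/
lemma sug_vanish (hJJ : ∀ m n : ℤ, ∀ v : V,
      J m (J n v) - J n (J m v) = if m + n = 0 then (m : ℂ) • v else 0)
    (hadj : ∀ (m : ℤ) (ψ φ : V), ⟪J m ψ, φ⟫_ℂ = ⟪ψ, J (-m) φ⟫_ℂ)
    (hJ0 : ∀ v : V, J 0 v = 0)
    (hlf : ∀ v : V, ∃ N : ℤ, ∀ m : ℤ, N ≤ m → J m v = 0)
    (N : ℤ) (hN : 0 ≤ N) (Ψ : V) (hΨ : sugawara J 0 Ψ = (N : ℂ) • Ψ)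
    (k : ℤ) (hk : N < k) : sugawara J k Ψ = 0 := by
  have hlev : ∀ b : ℤ, N < b → J b Ψ = 0 := fun b hb =>
    lower_vanish J hJJ hadj hJ0 hlf Ψ N hΨ b hb
  have hM : ∀ m : ℤ, k + 1 ≤ m → J m Ψ = 0 := fun m hm => hlev m (by omega)
  rw [sug_finset J k (k + 1) Ψ hM (by omega) (by omega)]
  have hz : ∀ j ∈ Icc (k - (k + 1)) (k + 1), trm J k Ψ j = 0 := by
    intro j hj
    simp only [mem_Icc] at hj
    unfold trm
    by_cases hjp : -1 < j
    · rw [if_pos hjp]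
      by_cases hjN : N < j
      · rw [hlev j hjN, map_zero]
      · exact lower_vanish J hJJ hadj hJ0 hlf (J j Ψ) (N - j)
          (eigJ J hJJ hJ0 hlf Ψ N hΨ j) (k - j) (by omega)
    · rw [if_neg hjp, hlev (k - j) (by omega), map_zero]
  rw [Finset.sum_eq_zero hz, smul_zero]

/-- Quantitative bound on the normal-ordered part. -/
lemma E_bound (hJJ : ∀ m n : ℤ, ∀ v : V,
      J m (J n v) - J n (J m v) = if m + n = 0 then (m : ℂ) • v else 0)
    (hadj : ∀ (m : ℤ) (ψ φ : V), ⟪J m ψ, φ⟫_ℂ = ⟪ψ, J (-m) φ⟫_ℂ)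
    (hJ0 : ∀ v : V, J 0 v = 0)
    (hlf : ∀ v : V, ∃ N : ℤ, ∀ m : ℤ, N ≤ m → J m v = 0)
    (N : ℤ) (Ψ : V) (hΨ : sugawara J 0 Ψ = (N : ℂ) • Ψ)
    (k : ℤ) (hk1 : 1 ≤ k) (hkN : k ≤ N) :
    ‖∑ mm ∈ Icc (1 : ℤ) (N - k), J (-mm) (J (k + mm) Ψ)‖ ^ 2
      ≤ ((N - k : ℤ) : ℝ) * ∑ β ∈ Icc (k + 1) N, ‖J β Ψ‖ ^ 2 := by
  have heig : ∀ b : ℤ, sugawara J 0 (J b Ψ) = ((N - b : ℤ) : ℂ) • J b Ψ :=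
    fun b => eigJ J hJJ hJ0 hlf Ψ N hΨ b
  have hxx : ∀ y : V, (⟪y, y⟫_ℂ).re = ‖y‖ ^ 2 := fun y => inner_self_eq_norm_sq (𝕜 := ℂ) y
  have hexp : ⟪∑ mm ∈ Icc (1 : ℤ) (N - k), J (-mm) (J (k + mm) Ψ),
        ∑ mm ∈ Icc (1 : ℤ) (N - k), J (-mm) (J (k + mm) Ψ)⟫_ℂ
      = ∑ mm ∈ Icc (1 : ℤ) (N - k), ∑ m' ∈ Icc (1 : ℤ) (N - k),
          ⟪J (-mm) (J (k + mm) Ψ), J (-m') (J (k + m') Ψ)⟫_ℂ := by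
    rw [sum_inner]
    exact Finset.sum_congr rfl fun mm _ => by rw [inner_sum]
  have hre : ‖∑ mm ∈ Icc (1 : ℤ) (N - k), J (-mm) (J (k + mm) Ψ)‖ ^ 2
      = ∑ mm ∈ Icc (1 : ℤ) (N - k), ∑ m' ∈ Icc (1 : ℤ) (N - k),
          (⟪J (-mm) (J (k + mm) Ψ), J (-m') (J (k + m') Ψ)⟫_ℂ).re := by
    rw [← hxx, hexp, Complex.re_sum]
    exact Finset.sum_congr rfl fun mm _ => by rw [Complex.re_sum]
  have hex : ∀ mm m' : ℤ, (⟪J (-mm) (J (k + mm) Ψ), J (-m') (J (k + m') Ψ)⟫_ℂ).re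
      = (⟪J m' (J (k + mm) Ψ), J mm (J (k + m') Ψ)⟫_ℂ).re
        + (if mm = m' then (mm : ℝ) * ‖J (k + mm) Ψ‖ ^ 2 else 0) := by
    intro mm m'
    have h1 : ⟪J (-mm) (J (k + mm) Ψ), J (-m') (J (k + m') Ψ)⟫_ℂ
        = ⟪J m' (J (k + mm) Ψ), J mm (J (k + m') Ψ)⟫_ℂ
          + (if mm + -m' = 0 then (mm : ℂ) * ⟪J (k + mm) Ψ, J (k + m') Ψ⟫_ℂ else 0) := by
      rw [hadj (-mm) _ _, neg_neg, comm' J hJJ mm (-m') _, inner_add_right]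
      congr 1
      · exact (hadj m' _ _).symm
      · by_cases h : mm + -m' = 0
        · rw [if_pos h, if_pos h, inner_smul_right]
        · rw [if_neg h, if_neg h, inner_zero_right]
    rw [h1, Complex.add_re]
    congr 1
    by_cases h : mm = m'
    · subst h
      rw [if_pos (by ring), if_pos rfl, Complex.mul_re]
      rw [show (⟪J (k + mm) Ψ, J (k + mm) Ψ⟫_ℂ).re
          = RCLike.re ⟪J (k + mm) Ψ, J (k + mm) Ψ⟫_ℂ from rfl,
        inner_self_eq_norm_sq (𝕜 := ℂ)]
      rw [show (⟪J (k + mm) Ψ, J (k + mm) Ψ⟫_ℂ).im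
          = RCLike.im ⟪J (k + mm) Ψ, J (k + mm) Ψ⟫_ℂ from rfl,
        inner_self_im (𝕜 := ℂ)]
      simp
    · rw [if_neg (by omega), if_neg h, Complex.zero_re]
  have hbound : ∀ mm ∈ Icc (1 : ℤ) (N - k), ∀ m' ∈ Icc (1 : ℤ) (N - k),
      (⟪J (-mm) (J (k + mm) Ψ), J (-m') (J (k + m') Ψ)⟫_ℂ).re
        ≤ (1 / 2) * ‖J m' (J (k + mm) Ψ)‖ ^ 2 + (1 / 2) * ‖J mm (J (k + m') Ψ)‖ ^ 2
          + (if mm = m' then (mm : ℝ) * ‖J (k + mm) Ψ‖ ^ 2 else 0) := by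
    intro mm _ m' _
    rw [hex mm m']
    have h1 := Complex.re_le_norm ⟪J m' (J (k + mm) Ψ), J mm (J (k + m') Ψ)⟫_ℂ
    have h2 := norm_inner_le_norm (𝕜 := ℂ) (J m' (J (k + mm) Ψ)) (J mm (J (k + m') Ψ))
    nlinarith [sq_nonneg (‖J m' (J (k + mm) Ψ)‖ - ‖J mm (J (k + m') Ψ)‖)]
  have hstep1 : ‖∑ mm ∈ Icc (1 : ℤ) (N - k), J (-mm) (J (k + mm) Ψ)‖ ^ 2
      ≤ ∑ mm ∈ Icc (1 : ℤ) (N - k), ∑ m' ∈ Icc (1 : ℤ) (N - k),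
          ((1 / 2) * ‖J m' (J (k + mm) Ψ)‖ ^ 2 + (1 / 2) * ‖J mm (J (k + m') Ψ)‖ ^ 2
            + (if mm = m' then (mm : ℝ) * ‖J (k + mm) Ψ‖ ^ 2 else 0)) := by
    rw [hre]
    exact Finset.sum_le_sum fun mm hmm => Finset.sum_le_sum fun m' hm' =>
      hbound mm hmm m' hm'
  have hsplit : ∑ mm ∈ Icc (1 : ℤ) (N - k), ∑ m' ∈ Icc (1 : ℤ) (N - k),
          ((1 / 2) * ‖J m' (J (k + mm) Ψ)‖ ^ 2 + (1 / 2) * ‖J mm (J (k + m') Ψ)‖ ^ 2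
            + (if mm = m' then (mm : ℝ) * ‖J (k + mm) Ψ‖ ^ 2 else 0))
      = (∑ mm ∈ Icc (1 : ℤ) (N - k), ∑ m' ∈ Icc (1 : ℤ) (N - k), ‖J m' (J (k + mm) Ψ)‖ ^ 2)
        + ∑ mm ∈ Icc (1 : ℤ) (N - k),
            (if mm ∈ Icc (1 : ℤ) (N - k) then (mm : ℝ) * ‖J (k + mm) Ψ‖ ^ 2 else 0) := by
    simp only [Finset.sum_add_distrib]
    congr 1
    · rw [← Finset.sum_add_distrib]
      have hsc : ∑ mm ∈ Icc (1 : ℤ) (N - k), ∑ m' ∈ Icc (1 : ℤ) (N - k),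
            (1 / 2 : ℝ) * ‖J mm (J (k + m') Ψ)‖ ^ 2
          = ∑ mm ∈ Icc (1 : ℤ) (N - k), ∑ m' ∈ Icc (1 : ℤ) (N - k),
            (1 / 2 : ℝ) * ‖J m' (J (k + mm) Ψ)‖ ^ 2 := Finset.sum_comm
      rw [Finset.sum_add_distrib, hsc, ← Finset.sum_add_distrib]
      refine Finset.sum_congr rfl fun mm _ => ?_
      rw [← Finset.sum_add_distrib]
      refine Finset.sum_congr rfl fun m' _ => by ring
    · refine Finset.sum_congr rfl fun mm _ => ?_
      exact Finset.sum_ite_eq (Icc (1 : ℤ) (N - k)) mm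
        (fun m' => (mm : ℝ) * ‖J (k + mm) Ψ‖ ^ 2)
  have henergy : ∀ mm ∈ Icc (1 : ℤ) (N - k),
      ∑ m' ∈ Icc (1 : ℤ) (N - k), ‖J m' (J (k + mm) Ψ)‖ ^ 2
        ≤ ((N - (k + mm) : ℤ) : ℝ) * ‖J (k + mm) Ψ‖ ^ 2 := by
    intro mm _
    exact energy_le J hadj hJ0 hlf (J (k + mm) Ψ) (N - (k + mm)) (heig (k + mm))
      (Icc (1 : ℤ) (N - k)) (fun m hm => by simp only [mem_Icc] at hm; omega)
  have hdiag : ∀ mm ∈ Icc (1 : ℤ) (N - k),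
      (if mm ∈ Icc (1 : ℤ) (N - k) then (mm : ℝ) * ‖J (k + mm) Ψ‖ ^ 2 else 0)
        = (mm : ℝ) * ‖J (k + mm) Ψ‖ ^ 2 := fun mm hmm => if_pos hmm
  have htot : ‖∑ mm ∈ Icc (1 : ℤ) (N - k), J (-mm) (J (k + mm) Ψ)‖ ^ 2
      ≤ ∑ mm ∈ Icc (1 : ℤ) (N - k), ((N - k : ℤ) : ℝ) * ‖J (k + mm) Ψ‖ ^ 2 := by
    refine le_trans hstep1 ?_
    rw [hsplit, Finset.sum_congr rfl hdiag]
    rw [← Finset.sum_add_distrib]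
    refine Finset.sum_le_sum fun mm hmm => ?_
    have h1 := henergy mm hmm
    simp only [mem_Icc] at hmm
    have h2 : ((N - (k + mm) : ℤ) : ℝ) + (mm : ℝ) = ((N - k : ℤ) : ℝ) := by
      push_cast; ring
    nlinarith [h1]
  refine le_trans htot ?_
  rw [← Finset.mul_sum]
  have hrdx : ∑ mm ∈ Icc (1 : ℤ) (N - k), ‖J (k + mm) Ψ‖ ^ 2
      = ∑ β ∈ Icc (k + 1) N, ‖J β Ψ‖ ^ 2 := by
    refine Finset.sum_nbij' (i := fun mm => k + mm) (j := fun β => β - k) ?_ ?_ ?_ ?_ ?_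
    · intro a ha; simp only [mem_Icc] at ha ⊢; omega
    · intro a ha; simp only [mem_Icc] at ha ⊢; omega
    · intro a _; ring
    · intro a _; ring
    · intro a _; rfl
  rw [hrdx]

/-- Aggregated bound for the doubly-lowering parts. -/
lemma swapD (hJJ : ∀ m n : ℤ, ∀ v : V,
      J m (J n v) - J n (J m v) = if m + n = 0 then (m : ℂ) • v else 0)
    (hadj : ∀ (m : ℤ) (ψ φ : V), ⟪J m ψ, φ⟫_ℂ = ⟪ψ, J (-m) φ⟫_ℂ)
    (hJ0 : ∀ v : V, J 0 v = 0)
    (hlf : ∀ v : V, ∃ N : ℤ, ∀ m : ℤ, N ≤ m → J m v = 0)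
    (N : ℤ) (hN1 : 1 ≤ N) (Ψ : V) (hΨ : sugawara J 0 Ψ = (N : ℂ) • Ψ) :
    ∑ k ∈ Icc (1 : ℤ) N, ∑ a ∈ Icc (1 : ℤ) (k - 1), ‖J (k - a) (J a Ψ)‖ ^ 2
      ≤ ((N : ℝ) - 1) * ((N : ℝ) * ‖Ψ‖ ^ 2) := by
  have heig : ∀ b : ℤ, sugawara J 0 (J b Ψ) = ((N - b : ℤ) : ℂ) • J b Ψ :=
    fun b => eigJ J hJJ hJ0 hlf Ψ N hΨ b
  have step1 : ∀ k ∈ Icc (1 : ℤ) N, ∑ a ∈ Icc (1 : ℤ) (k - 1), ‖J (k - a) (J a Ψ)‖ ^ 2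
      = ∑ a ∈ Icc (1 : ℤ) N, if a ≤ k - 1 then ‖J (k - a) (J a Ψ)‖ ^ 2 else 0 := by
    intro k hk
    simp only [mem_Icc] at hk
    rw [← Finset.sum_filter]
    congr 1
    ext a
    simp only [mem_filter, mem_Icc]
    omega
  rw [Finset.sum_congr rfl step1, Finset.sum_comm]
  have step2 : ∀ a ∈ Icc (1 : ℤ) N,
      (∑ k ∈ Icc (1 : ℤ) N, if a ≤ k - 1 then ‖J (k - a) (J a Ψ)‖ ^ 2 else 0)
        ≤ ((N : ℝ) - 1) * ‖J a Ψ‖ ^ 2 := by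
    intro a ha
    simp only [mem_Icc] at ha
    have e1 : (∑ k ∈ Icc (1 : ℤ) N, if a ≤ k - 1 then ‖J (k - a) (J a Ψ)‖ ^ 2 else 0)
        = ∑ k ∈ Icc (a + 1) N, ‖J (k - a) (J a Ψ)‖ ^ 2 := by
      rw [← Finset.sum_filter]
      congr 1
      ext x
      simp only [mem_filter, mem_Icc]
      omega
    rw [e1]
    have e2 : ∑ k ∈ Icc (a + 1) N, ‖J (k - a) (J a Ψ)‖ ^ 2
        = ∑ b ∈ Icc (1 : ℤ) (N - a), ‖J b (J a Ψ)‖ ^ 2 := by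
      refine Finset.sum_nbij' (i := fun k => k - a) (j := fun b => b + a) ?_ ?_ ?_ ?_ ?_
      · intro x hx; simp only [mem_Icc] at hx ⊢; omega
      · intro x hx; simp only [mem_Icc] at hx ⊢; omega
      · intro x _; ring
      · intro x _; ring
      · intro x _; rfl
    rw [e2]
    refine le_trans (energy_le J hadj hJ0 hlf (J a Ψ) (N - a) (heig a)
      (Icc (1 : ℤ) (N - a)) (fun m hm => by simp only [mem_Icc] at hm; omega)) ?_
    have h1 : ((N - a : ℤ) : ℝ) ≤ (N : ℝ) - 1 := by
      have : (1 : ℝ) ≤ (a : ℝ) := by exact_mod_cast ha.1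
      push_cast
      linarith
    nlinarith [sq_nonneg ‖J a Ψ‖]
  refine le_trans (Finset.sum_le_sum step2) ?_
  rw [← Finset.mul_sum]
  have henergy := energy_le J hadj hJ0 hlf Ψ N hΨ (Icc (1 : ℤ) N)
    (fun m hm => by simp only [mem_Icc] at hm; omega)
  have hN1' : (0 : ℝ) ≤ (N : ℝ) - 1 := by
    have : (1 : ℝ) ≤ (N : ℝ) := by exact_mod_cast hN1
    linarith
  exact mul_le_mul_of_nonneg_left henergy hN1'

/-- Aggregated bound for the `x_β` sums. -/
lemma swapE (hadj : ∀ (m : ℤ) (ψ φ : V), ⟪J m ψ, φ⟫_ℂ = ⟪ψ, J (-m) φ⟫_ℂ)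
    (hJ0 : ∀ v : V, J 0 v = 0)
    (hlf : ∀ v : V, ∃ N : ℤ, ∀ m : ℤ, N ≤ m → J m v = 0)
    (N : ℤ) (hN1 : 1 ≤ N) (Ψ : V) (hΨ : sugawara J 0 Ψ = (N : ℂ) • Ψ) :
    ∑ k ∈ Icc (1 : ℤ) N, ∑ β ∈ Icc (k + 1) N, ‖J β Ψ‖ ^ 2
      ≤ ((N : ℝ) - 1) * ((N : ℝ) * ‖Ψ‖ ^ 2) := by
  have step1 : ∀ k ∈ Icc (1 : ℤ) N, ∑ β ∈ Icc (k + 1) N, ‖J β Ψ‖ ^ 2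
      = ∑ β ∈ Icc (1 : ℤ) N, if k ≤ β - 1 then ‖J β Ψ‖ ^ 2 else 0 := by
    intro k hk
    simp only [mem_Icc] at hk
    rw [← Finset.sum_filter]
    congr 1
    ext β
    simp only [mem_filter, mem_Icc]
    omega
  rw [Finset.sum_congr rfl step1, Finset.sum_comm]
  have step2 : ∀ β ∈ Icc (1 : ℤ) N,
      (∑ k ∈ Icc (1 : ℤ) N, if k ≤ β - 1 then ‖J β Ψ‖ ^ 2 else 0)
        ≤ ((N : ℝ) - 1) * ‖J β Ψ‖ ^ 2 := by
    intro β hβ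
    simp only [mem_Icc] at hβ
    have e1 : (∑ k ∈ Icc (1 : ℤ) N, if k ≤ β - 1 then ‖J β Ψ‖ ^ 2 else 0)
        = ∑ k ∈ Icc (1 : ℤ) (β - 1), ‖J β Ψ‖ ^ 2 := by
      rw [← Finset.sum_filter]
      congr 1
      ext x
      simp only [mem_filter, mem_Icc]
      omega
    rw [e1, Finset.sum_const, nsmul_eq_mul]
    have hcard : (((Icc (1 : ℤ) (β - 1)).card : ℝ)) ≤ (N : ℝ) - 1 := by
      rw [Int.card_Icc]
      have h1 : ((β - 1 + 1 - 1).toNat : ℤ) = β - 1 := by omega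
      have h2 : ((β - 1 + 1 - 1).toNat : ℝ) = (β : ℝ) - 1 := by exact_mod_cast h1
      rw [h2]
      have : (β : ℝ) ≤ (N : ℝ) := by exact_mod_cast hβ.2
      linarith
    nlinarith [sq_nonneg ‖J β Ψ‖]
  refine le_trans (Finset.sum_le_sum step2) ?_
  rw [← Finset.mul_sum]
  have henergy := energy_le J hadj hJ0 hlf Ψ N hΨ (Icc (1 : ℤ) N)
    (fun m hm => by simp only [mem_Icc] at hm; omega)
  have hN1' : (0 : ℝ) ≤ (N : ℝ) - 1 := by
    have : (1 : ℝ) ≤ (N : ℝ) := by exact_mod_cast hN1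
    linarith
  exact mul_le_mul_of_nonneg_left henergy hN1'


lemma sq_combine (x t e SD SE c : ℝ) (hx : 0 ≤ x) (ht : 0 ≤ t) (he : 0 ≤ e)
    (hX : x ≤ 1 / 2 * t + e) (hD : t ^ 2 ≤ c * SD) (hE : e ^ 2 ≤ c * SE) :
    x ^ 2 ≤ 3 / 4 * (c * SD) + 3 / 2 * (c * SE) := by
  nlinarith [sq_nonneg (t - e), sq_nonneg x, mul_nonneg ht he]

lemma fin_combine (S SD SE K c : ℝ) (hc : 0 ≤ c)
    (h1 : S ≤ 3 / 4 * (c * SD) + 3 / 2 * (c * SE)) (hD : SD ≤ K) (hE : SE ≤ K) :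
    S ≤ 9 / 4 * (c * K) := by nlinarith

lemma last_combine (S x nn : ℝ) (hx : 0 ≤ x) (hn : 1 ≤ nn)
    (h : S ≤ 9 / 4 * ((nn - 1) * ((nn - 1) * (nn * x)))) :
    S + nn ^ 2 * x ≤ 9 / 4 * nn ^ 3 * x := by
  have hkey : (0 : ℝ) ≤ ((7 / 2) * nn ^ 2 - (9 / 4) * nn) * x :=
    mul_nonneg (by nlinarith) hx
  nlinarith [h, hkey]


end Stmt5Aux

/-- `0 ≤ ⟨Ψ, Σ_{k≥0} L_{−k}L_k Ψ⟩ ≤ (9/4)n³‖Ψ‖²` on the `n`-th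
eigenspace of `L₀` in the vacuum representation of the U(1)-current algebra. -/
theorem stmt_5 {V : Type*} [NormedAddCommGroup V] [InnerProductSpace ℂ V]
    (J : ℤ → Module.End ℂ V) (Ω : V)
    (hJJ : ∀ m n : ℤ, ∀ v : V,
      J m (J n v) - J n (J m v) = if m + n = 0 then (m : ℂ) • v else 0)
    (hadj : ∀ (m : ℤ) (ψ φ : V), ⟪J m ψ, φ⟫_ℂ = ⟪ψ, J (-m) φ⟫_ℂ)
    (hΩ : ‖Ω‖ = 1)
    (hΩann : ∀ n : ℤ, 0 ≤ n → J n Ω = 0)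
    (hspan : Submodule.span ℂ
      {v : V | ∃ l : List ℕ, (∀ m ∈ l, 1 ≤ m) ∧
        v = (l.map fun m => J (-(m : ℤ))).prod Ω} = ⊤)
    (hlf : ∀ v : V, ∃ N : ℤ, ∀ m : ℤ, N ≤ m → J m v = 0)
    (n : ℕ) (Ψ : V) (hΨ : sugawara J 0 Ψ = (n : ℂ) • Ψ) :
    0 ≤ (⟪Ψ, ∑ᶠ k : ℕ, sugawara J (-(k : ℤ)) (sugawara J (k : ℤ) Ψ)⟫_ℂ).re ∧
    (⟪Ψ, ∑ᶠ k : ℕ, sugawara J (-(k : ℤ)) (sugawara J (k : ℤ) Ψ)⟫_ℂ).im = 0 ∧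
    (⟪Ψ, ∑ᶠ k : ℕ, sugawara J (-(k : ℤ)) (sugawara J (k : ℤ) Ψ)⟫_ℂ).re
      ≤ 9 / 4 * (n : ℝ) ^ 3 * ‖Ψ‖ ^ 2 := by
  have hJ0 : ∀ v : V, J 0 v = 0 := Stmt5Aux.J0_zero J Ω hJJ hΩann hspan
  have hΨ' : sugawara J 0 Ψ = (((n : ℤ) : ℂ)) • Ψ := by rw [hΨ]; norm_cast
  have hN0 : (0 : ℤ) ≤ (n : ℤ) := Int.natCast_nonneg n
  have hLk0 : ∀ k : ℤ, (n : ℤ) < k → sugawara J k Ψ = 0 := fun k hk =>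
    Stmt5Aux.sug_vanish J hJJ hadj hJ0 hlf (n : ℤ) hN0 Ψ hΨ' k hk
  have houter : (∑ᶠ k : ℕ, sugawara J (-(k : ℤ)) (sugawara J (k : ℤ) Ψ))
      = ∑ k ∈ Finset.range (n + 1), sugawara J (-(k : ℤ)) (sugawara J (k : ℤ) Ψ) := by
    apply finsum_eq_sum_of_support_subset
    intro k hk
    simp only [Function.mem_support] at hk
    simp only [Finset.coe_range, Set.mem_Iio]
    by_contra hk2
    apply hk
    rw [hLk0 (k : ℤ) (by omega), Stmt5Aux.sug_zero]
  have hterm : ∀ k : ℕ, ⟪Ψ, sugawara J (-(k : ℤ)) (sugawara J (k : ℤ) Ψ)⟫_ℂ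
      = ((‖sugawara J (k : ℤ) Ψ‖ ^ 2 : ℝ) : ℂ) := by
    intro k
    rw [Stmt5Aux.sug_adj J hadj hJ0 hlf (-(k : ℤ)) Ψ (sugawara J (k : ℤ) Ψ), neg_neg,
      inner_self_eq_norm_sq_to_K]
    norm_cast
  have hS : ⟪Ψ, ∑ᶠ k : ℕ, sugawara J (-(k : ℤ)) (sugawara J (k : ℤ) Ψ)⟫_ℂ
      = ((∑ k ∈ Finset.range (n + 1), ‖sugawara J (k : ℤ) Ψ‖ ^ 2 : ℝ) : ℂ) := by
    rw [houter, inner_sum, Complex.ofReal_sum]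
    exact Finset.sum_congr rfl fun k _ => hterm k
  rw [hS]
  refine ⟨by rw [Complex.ofReal_re]; exact Finset.sum_nonneg fun k _ => sq_nonneg _,
    by rw [Complex.ofReal_im], ?_⟩
  rw [Complex.ofReal_re]
  rw [Finset.sum_range_succ']
  have h00 : ‖sugawara J ((0 : ℕ) : ℤ) Ψ‖ ^ 2 = (n : ℝ) ^ 2 * ‖Ψ‖ ^ 2 := by
    rw [show ((0 : ℕ) : ℤ) = 0 from rfl, hΨ, norm_smul, mul_pow, Complex.norm_natCast]
  by_cases hn : n = 0
  · subst hn
    rw [Finset.range_zero, Finset.sum_empty, h00]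
    norm_num
  · have hn1 : 1 ≤ n := Nat.one_le_iff_ne_zero.mpr hn
    have hN1 : (1 : ℤ) ≤ (n : ℤ) := by exact_mod_cast hn1
    have hnR : (1 : ℝ) ≤ (n : ℝ) := by exact_mod_cast hn1
    have hreidx : ∑ i ∈ Finset.range n, ‖sugawara J (((i + 1 : ℕ)) : ℤ) Ψ‖ ^ 2
        = ∑ k ∈ Finset.Icc (1 : ℤ) (n : ℤ), ‖sugawara J k Ψ‖ ^ 2 := by
      refine Finset.sum_nbij' (i := fun i => (i : ℤ) + 1) (j := fun k => (k - 1).toNat)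
        ?_ ?_ ?_ ?_ ?_
      · intro a ha; simp only [Finset.mem_range] at ha; simp only [Finset.mem_Icc]; omega
      · intro a ha; simp only [Finset.mem_Icc] at ha; simp only [Finset.mem_range]; omega
      · intro a _; omega
      · intro a ha; simp only [Finset.mem_Icc] at ha; omega
      · intro a _
        have hca : (((a + 1 : ℕ)) : ℤ) = (a : ℤ) + 1 := by push_cast; ring
        rw [hca]
    rw [hreidx, h00]
    have hkb : ∀ k ∈ Finset.Icc (1 : ℤ) (n : ℤ), ‖sugawara J k Ψ‖ ^ 2
        ≤ (3 / 4) * (((n : ℝ) - 1)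
              * ∑ a ∈ Finset.Icc (1 : ℤ) (k - 1), ‖J (k - a) (J a Ψ)‖ ^ 2)
          + (3 / 2) * (((n : ℝ) - 1)
              * ∑ β ∈ Finset.Icc (k + 1) (n : ℤ), ‖J β Ψ‖ ^ 2) := by
      intro k hk
      simp only [Finset.mem_Icc] at hk
      rw [Stmt5Aux.sug_split J hJJ hadj hJ0 hlf (n : ℤ) Ψ hΨ' k hk.1 hk.2]
      have hD1 : ‖∑ a ∈ Finset.Icc (1 : ℤ) (k - 1), J (k - a) (J a Ψ)‖
          ≤ ∑ a ∈ Finset.Icc (1 : ℤ) (k - 1), ‖J (k - a) (J a Ψ)‖ := norm_sum_le _ _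
      have hD2 : (∑ a ∈ Finset.Icc (1 : ℤ) (k - 1), ‖J (k - a) (J a Ψ)‖) ^ 2
          ≤ ((n : ℝ) - 1) * ∑ a ∈ Finset.Icc (1 : ℤ) (k - 1), ‖J (k - a) (J a Ψ)‖ ^ 2 := by
        have h2 := Finset.sum_mul_sq_le_sq_mul_sq (Finset.Icc (1 : ℤ) (k - 1))
          (fun _ => (1 : ℝ)) (fun a => ‖J (k - a) (J a Ψ)‖)
        simp only [one_mul, one_pow] at h2
        rw [Finset.sum_const, nsmul_eq_mul, mul_one] at h2
        have hcard : (((Finset.Icc (1 : ℤ) (k - 1)).card : ℝ)) ≤ (n : ℝ) - 1 := by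
          rw [Int.card_Icc]
          have hh : ((k - 1 + 1 - 1).toNat : ℤ) = k - 1 := by omega
          have hh2 : ((k - 1 + 1 - 1).toNat : ℝ) = (k : ℝ) - 1 := by exact_mod_cast hh
          rw [hh2]
          have : (k : ℝ) ≤ (n : ℝ) := by exact_mod_cast hk.2
          linarith
        have hs0 : (0 : ℝ) ≤ ∑ a ∈ Finset.Icc (1 : ℤ) (k - 1), ‖J (k - a) (J a Ψ)‖ ^ 2 :=
          Finset.sum_nonneg fun a _ => sq_nonneg _
        nlinarith
      have hE2 := Stmt5Aux.E_bound J hJJ hadj hJ0 hlf (n : ℤ) Ψ hΨ' k hk.1 hk.2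
      have hE3 : ‖∑ mm ∈ Finset.Icc (1 : ℤ) ((n : ℤ) - k), J (-mm) (J (k + mm) Ψ)‖ ^ 2
          ≤ ((n : ℝ) - 1) * ∑ β ∈ Finset.Icc (k + 1) (n : ℤ), ‖J β Ψ‖ ^ 2 := by
        refine le_trans hE2 ?_
        have hc1 : ((((n : ℤ) - k : ℤ)) : ℝ) ≤ (n : ℝ) - 1 := by
          have : (1 : ℝ) ≤ (k : ℝ) := by exact_mod_cast hk.1
          push_cast
          linarith
        have hs0 : (0 : ℝ) ≤ ∑ β ∈ Finset.Icc (k + 1) (n : ℤ), ‖J β Ψ‖ ^ 2 :=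
          Finset.sum_nonneg fun a _ => sq_nonneg _
        nlinarith
      have hhalf : ‖((1 : ℂ) / 2)‖ = 1 / 2 := by norm_num
      have htri : ‖((1 : ℂ) / 2) • (∑ a ∈ Finset.Icc (1 : ℤ) (k - 1), J (k - a) (J a Ψ))
            + ∑ mm ∈ Finset.Icc (1 : ℤ) ((n : ℤ) - k), J (-mm) (J (k + mm) Ψ)‖
          ≤ (1 / 2) * ‖∑ a ∈ Finset.Icc (1 : ℤ) (k - 1), J (k - a) (J a Ψ)‖
            + ‖∑ mm ∈ Finset.Icc (1 : ℤ) ((n : ℤ) - k), J (-mm) (J (k + mm) Ψ)‖ := by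
        refine le_trans (norm_add_le _ _) ?_
        rw [norm_smul, hhalf]
      have hXle : ‖((1 : ℂ) / 2) • (∑ a ∈ Finset.Icc (1 : ℤ) (k - 1), J (k - a) (J a Ψ))
            + ∑ mm ∈ Finset.Icc (1 : ℤ) ((n : ℤ) - k), J (-mm) (J (k + mm) Ψ)‖
          ≤ (1 / 2) * (∑ a ∈ Finset.Icc (1 : ℤ) (k - 1), ‖J (k - a) (J a Ψ)‖)
            + ‖∑ mm ∈ Finset.Icc (1 : ℤ) ((n : ℤ) - k), J (-mm) (J (k + mm) Ψ)‖ := by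
        refine le_trans htri ?_
        linarith
      have hXnn := norm_nonneg (((1 : ℂ) / 2)
        • (∑ a ∈ Finset.Icc (1 : ℤ) (k - 1), J (k - a) (J a Ψ))
          + ∑ mm ∈ Finset.Icc (1 : ℤ) ((n : ℤ) - k), J (-mm) (J (k + mm) Ψ))
      have htnn : (0 : ℝ) ≤ ∑ a ∈ Finset.Icc (1 : ℤ) (k - 1), ‖J (k - a) (J a Ψ)‖ :=
        Finset.sum_nonneg fun a _ => norm_nonneg _
      have hEnn := norm_nonneg
        (∑ mm ∈ Finset.Icc (1 : ℤ) ((n : ℤ) - k), J (-mm) (J (k + mm) Ψ))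
      exact Stmt5Aux.sq_combine _ _ _ _ _ _ hXnn htnn hEnn hXle hD2 hE3
    have hsum1 : ∑ k ∈ Finset.Icc (1 : ℤ) (n : ℤ), ‖sugawara J k Ψ‖ ^ 2
        ≤ (3 / 4) * (((n : ℝ) - 1) * ∑ k ∈ Finset.Icc (1 : ℤ) (n : ℤ),
              ∑ a ∈ Finset.Icc (1 : ℤ) (k - 1), ‖J (k - a) (J a Ψ)‖ ^ 2)
          + (3 / 2) * (((n : ℝ) - 1) * ∑ k ∈ Finset.Icc (1 : ℤ) (n : ℤ),
              ∑ β ∈ Finset.Icc (k + 1) (n : ℤ), ‖J β Ψ‖ ^ 2) := by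
      refine le_trans (Finset.sum_le_sum hkb) ?_
      rw [Finset.sum_add_distrib, ← Finset.mul_sum, ← Finset.mul_sum, ← Finset.mul_sum,
        ← Finset.mul_sum]
    have hswD := Stmt5Aux.swapD J hJJ hadj hJ0 hlf (n : ℤ) hN1 Ψ hΨ'
    have hswE := Stmt5Aux.swapE J hadj hJ0 hlf (n : ℤ) hN1 Ψ hΨ'
    have hnn : (0 : ℝ) ≤ (n : ℝ) - 1 := by linarith
    have hfin : ∑ k ∈ Finset.Icc (1 : ℤ) (n : ℤ), ‖sugawara J k Ψ‖ ^ 2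
        ≤ (9 / 4) * (((n : ℝ) - 1) * (((n : ℝ) - 1) * ((n : ℝ) * ‖Ψ‖ ^ 2))) :=
      Stmt5Aux.fin_combine _ _ _ _ _ hnn hsum1 hswD hswE
    have hx : (0 : ℝ) ≤ ‖Ψ‖ ^ 2 := sq_nonneg _
    exact Stmt5Aux.last_combine _ _ _ hx hnR hfin
end

section
/- Let k ≥ 1 be an integer, let β > 0 and C > 0 be real numbers, and let γ : ℕ → ℝ be a nonnegative sequence such that γ(m) = 0 for all m < k and γ(n+k)² ≤ γ(n)² + C·(n+1)^β for all n ∈ ℕ. Then γ(n)² ≤ (C/(k(β+1)))·(n+1)^{β+1} for all n ∈ ℕ. -/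
lemma stmt7_key (a t p : ℝ) (ha : 1 ≤ a) (ht : 0 ≤ t) (hp : 1 ≤ p) :
    a ^ p + p * (a ^ (p - 1)) * t ≤ (a + t) ^ p := by
  have ha0 : 0 < a := lt_of_lt_of_le one_pos ha
  have hs : -1 ≤ t / a := le_trans (by norm_num) (div_nonneg ht ha0.le)
  have bern := one_add_mul_self_le_rpow_one_add hs hp
  have h1 : a + t = a * (1 + t / a) := by field_simp
  have h2 : (a * (1 + t / a)) ^ p = a ^ p * (1 + t / a) ^ p :=
    Real.mul_rpow ha0.le (by linarith [div_nonneg ht ha0.le])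
  rw [h1, h2]
  have h3 : a ^ p * (1 + p * (t / a)) ≤ a ^ p * (1 + t / a) ^ p :=
    mul_le_mul_of_nonneg_left bern (Real.rpow_nonneg ha0.le p)
  refine le_trans (le_of_eq ?_) h3
  have h4 : a ^ p = a ^ (p - 1) * a := by
    rw [← Real.rpow_add_one ha0.ne' (p - 1)]; ring_nf
  rw [h4]; field_simp

/-- the recursive estimate. -/
theorem stmt_7 (k : ℕ) (hk : 1 ≤ k) (β C : ℝ) (hβ : 0 < β) (hC : 0 < C)
    (γ : ℕ → ℝ) (hγ : ∀ n, 0 ≤ γ n)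
    (h0 : ∀ m : ℕ, m < k → γ m = 0)
    (hrec : ∀ n : ℕ, γ (n + k) ^ 2 ≤ γ n ^ 2 + C * ((n : ℝ) + 1) ^ β) :
    ∀ n : ℕ, γ n ^ 2 ≤ C / (k * (β + 1)) * ((n : ℝ) + 1) ^ (β + 1) := by
  have hk0 : (0:ℝ) < k := by exact_mod_cast hk
  have hβ1 : (0:ℝ) < β + 1 := by linarith
  intro n
  induction n using Nat.strong_induction_on with
  | _ n ih =>
    rcases lt_or_ge n k with h | h
    · rw [h0 n h]
      have : (0:ℝ) < ((n:ℝ) + 1) ^ (β + 1) := Real.rpow_pos_of_pos (by positivity) _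
      have : (0:ℝ) < C / (k * (β + 1)) := by positivity
      nlinarith
    · obtain ⟨m, rfl⟩ : ∃ m, n = m + k := ⟨n - k, by omega⟩
      have h1 := hrec m
      have h2 := ih m (by omega)
      have ha : (1:ℝ) ≤ (m:ℝ) + 1 := by have := Nat.cast_nonneg (α:=ℝ) m; linarith
      have key := stmt7_key ((m:ℝ) + 1) (k:ℝ) (β + 1) ha hk0.le (by linarith)
      have hsimp : (β + 1) - 1 = β := by ring
      rw [hsimp] at key
      have hcast : ((m + k : ℕ) : ℝ) + 1 = ((m:ℝ) + 1) + (k:ℝ) := by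
        push_cast; ring
      rw [hcast]
      have hmul : C / (k * (β + 1)) * (((m:ℝ) + 1) ^ (β + 1) + (β + 1) * (((m:ℝ)+1) ^ β) * k)
          = C / (k * (β + 1)) * ((m:ℝ) + 1) ^ (β + 1) + C * ((m:ℝ) + 1) ^ β := by
        field_simp
      calc γ (m + k) ^ 2 ≤ γ m ^ 2 + C * ((m:ℝ) + 1) ^ β := h1
        _ ≤ C / (k * (β + 1)) * ((m:ℝ) + 1) ^ (β + 1) + C * ((m:ℝ) + 1) ^ β := by linarith
        _ = C / (k * (β + 1)) * (((m:ℝ) + 1) ^ (β + 1) + (β + 1) * (((m:ℝ)+1) ^ β) * k) := hmul.symm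
        _ ≤ C / (k * (β + 1)) * (((m:ℝ) + 1) + (k:ℝ)) ^ (β + 1) := by
            apply mul_le_mul_of_nonneg_left key (by positivity)
end

section
/- Let V be a complex inner product space which is the algebraic span of a family (V_m)_{m∈ℕ} of pairwise orthogonal subspaces, let n ∈ ℤ, and let P, Q be linear operators on V such that P(V_m) ⊆ V_{m+n} and Q(V_m) ⊆ V_{m−n} for all m (with V_j := {0} for j < 0) and ⟨Qψ, φ⟩ = ⟨ψ, Pφ⟩ for all ψ, φ ∈ V. Suppose there are constants C > 0, r > 0, s > 0 with ‖Pψ‖ ≤ C·(1+|n|)^r·(m+1)^s·‖ψ‖ for every m ∈ ℕ and ψ ∈ V_m. Then ‖Qψ‖ ≤ C·(1+|n|)^{r+s}·(m+1)^s·‖ψ‖ for every m ∈ ℕ and ψ ∈ V_m. -/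
open scoped InnerProductSpace

/-- polynomial energy bounds pass to the adjoint mode. -/
theorem stmt_8 {V : Type*} [NormedAddCommGroup V] [InnerProductSpace ℂ V]
    (Vm : ℤ → Submodule ℂ V)
    (hneg : ∀ j : ℤ, j < 0 → Vm j = ⊥)
    (horth : ∀ i j : ℤ, i ≠ j → ∀ ψ ∈ Vm i, ∀ φ ∈ Vm j, ⟪ψ, φ⟫_ℂ = 0)
    (hspan : ⨆ j, Vm j = ⊤)
    (n : ℤ)
    (P Q : V →ₗ[ℂ] V)
    (hP : ∀ m : ℤ, ∀ ψ ∈ Vm m, P ψ ∈ Vm (m + n))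
    (hQ : ∀ m : ℤ, ∀ ψ ∈ Vm m, Q ψ ∈ Vm (m - n))
    (hadj : ∀ ψ φ : V, ⟪Q ψ, φ⟫_ℂ = ⟪ψ, P φ⟫_ℂ)
    (C r s : ℝ) (hC : 0 < C) (hr : 0 < r) (hs : 0 < s)
    (hbound : ∀ m : ℕ, ∀ ψ ∈ Vm (m : ℤ),
      ‖P ψ‖ ≤ C * (1 + |(n : ℝ)|) ^ r * ((m : ℝ) + 1) ^ s * ‖ψ‖) :
    ∀ m : ℕ, ∀ ψ ∈ Vm (m : ℤ),
      ‖Q ψ‖ ≤ C * (1 + |(n : ℝ)|) ^ (r + s) * ((m : ℝ) + 1) ^ s * ‖ψ‖ := by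
  intro m ψ hψ
  set A : ℝ := 1 + |(n : ℝ)| with hA
  have hA1 : (1 : ℝ) ≤ A := by simp [hA, abs_nonneg]
  have hA0 : (0 : ℝ) < A := lt_of_lt_of_le one_pos hA1
  have hAr : (0 : ℝ) < A ^ r := Real.rpow_pos_of_pos hA0 r
  have hAs : (0 : ℝ) < A ^ s := Real.rpow_pos_of_pos hA0 s
  have hm1 : (0 : ℝ) < (m : ℝ) + 1 := by positivity
  have hms : (0 : ℝ) < ((m : ℝ) + 1) ^ s := Real.rpow_pos_of_pos hm1 s
  by_cases hneg' : (m : ℤ) - n < 0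
  · have hz : Q ψ = 0 := by
      have := hQ m ψ hψ
      rw [hneg _ hneg'] at this
      simpa using this
    rw [hz, norm_zero]
    have : (0:ℝ) ≤ C * A ^ (r+s) * ((m : ℝ) + 1) ^ s * ‖ψ‖ := by positivity
    exact this
  · push_neg at hneg'
    set k : ℕ := ((m : ℤ) - n).toNat with hkdef
    have hk : (k : ℤ) = (m : ℤ) - n := Int.toNat_of_nonneg hneg'
    have hQψ : Q ψ ∈ Vm (k : ℤ) := by rw [hk]; exact hQ m ψ hψ
    have h1 := hbound k (Q ψ) hQψ
    -- ‖Q ψ‖ ^ 2 ≤ ‖ψ‖ * ‖P (Q ψ)‖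
    have h2 : ‖Q ψ‖ * ‖Q ψ‖ ≤ ‖ψ‖ * ‖P (Q ψ)‖ := by
      have e1 : ‖Q ψ‖ * ‖Q ψ‖ = Complex.re ⟪Q ψ, Q ψ⟫_ℂ :=
        (inner_self_eq_norm_mul_norm (𝕜 := ℂ) (Q ψ)).symm
      rw [e1]
      calc Complex.re ⟪Q ψ, Q ψ⟫_ℂ ≤ ‖⟪Q ψ, Q ψ⟫_ℂ‖ := Complex.re_le_norm _
        _ = ‖⟪ψ, P (Q ψ)⟫_ℂ‖ := by rw [hadj]
        _ ≤ ‖ψ‖ * ‖P (Q ψ)‖ := norm_inner_le_norm _ _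
    -- key scalar bound
    have hk1 : (k : ℝ) + 1 ≤ A * ((m : ℝ) + 1) := by
      have hkR : (k : ℝ) = (m : ℝ) - (n : ℝ) := by
        have := congrArg (Int.cast : ℤ → ℝ) hk
        push_cast at this
        exact this
      have h3 : -(n : ℝ) ≤ |(n : ℝ)| := neg_le_abs _
      have h4 : (0 : ℝ) ≤ |(n : ℝ)| := abs_nonneg _
      have h5 : (0 : ℝ) ≤ (m : ℝ) := Nat.cast_nonneg m
      rw [hkR, hA]
      nlinarith
    have hks : ((k : ℝ) + 1) ^ s ≤ A ^ s * ((m : ℝ) + 1) ^ s := by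
      rw [← Real.mul_rpow (le_of_lt hA0) (le_of_lt hm1)]
      exact Real.rpow_le_rpow (by positivity) hk1 (le_of_lt hs)
    have hKey : ‖Q ψ‖ ≤ C * A ^ r * ((k : ℝ) + 1) ^ s * ‖ψ‖ := by
      rcases eq_or_lt_of_le (norm_nonneg (Q ψ)) with h0 | h0
      · rw [← h0]; positivity
      · have h6 : ‖Q ψ‖ * ‖Q ψ‖ ≤ ‖ψ‖ * (C * A ^ r * ((k : ℝ) + 1) ^ s * ‖Q ψ‖) :=
          h2.trans (by
            have := mul_le_mul_of_nonneg_left h1 (norm_nonneg ψ)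
            linarith)
        have := (mul_le_mul_iff_of_pos_right h0).mp (by linarith [h6] : ‖Q ψ‖ * ‖Q ψ‖ ≤ C * A ^ r * ((k : ℝ) + 1) ^ s * ‖ψ‖ * ‖Q ψ‖)
        exact this
    calc ‖Q ψ‖ ≤ C * A ^ r * ((k : ℝ) + 1) ^ s * ‖ψ‖ := hKey
      _ ≤ C * A ^ r * (A ^ s * ((m : ℝ) + 1) ^ s) * ‖ψ‖ := by
          have := mul_le_mul_of_nonneg_left hks (le_of_lt (mul_pos hC hAr))
          exact mul_le_mul_of_nonneg_right (by linarith [this]) (norm_nonneg ψ)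
      _ = C * A ^ (r + s) * ((m : ℝ) + 1) ^ s * ‖ψ‖ := by
          rw [Real.rpow_add hA0]; ring
end

section
/- Let V, (J_n)_{n∈ℤ}, Ω be the vacuum representation of the U(1)-current algebra and let (L_n)_{n∈ℤ} be the associated Sugawara operators. For all Ψ, Φ ∈ V one has Σ_{n∈ℤ} ⟨Ψ, L_n Φ⟩ = (1/2)⟨J₋J₋Ψ, Φ⟩ + (1/2)⟨Ψ, J₋J₋Φ⟩ + ⟨J₋Ψ, J₋Φ⟩, where J₋ψ := Σ_{n>0} J_n ψ and all sums (including the sum over n ∈ ℤ on the left, using ⟨Ψ, L_n Φ⟩ = ⟨L_{−n}Ψ, Φ⟩ for n < 0) have finitely many nonzero terms. -/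
open scoped InnerProductSpace

/-- `J₋ψ = Σ_{n>0} J_n ψ`, a finite sum on each vector of the vacuum
representation. -/
noncomputable def Jminus {V : Type*} [AddCommGroup V] [Module ℂ V]
    (J : ℤ → Module.End ℂ V) (ψ : V) : V :=
  ∑ᶠ n : ℤ, if 0 < n then J n ψ else 0

/-- Generic reindexing lemma for sums over `ℤ × ℤ`. -/
private lemma sum_reindex {P Q : Finset (ℤ × ℤ)} (σ τ : ℤ × ℤ → ℤ × ℤ)
    (f g : ℤ × ℤ → ℂ)
    (hfg : ∀ p ∈ P, f p = g (σ p))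
    (hτσ : ∀ p, τ (σ p) = p)
    (hστ : ∀ q, σ (τ q) = q)
    (himg : ∀ p ∈ P, σ p ∈ Q)
    (hz : ∀ q ∈ Q, τ q ∉ P → g q = 0) :
    ∑ p ∈ P, f p = ∑ q ∈ Q, g q := by
  classical
  rw [Finset.sum_congr rfl hfg,
    ← Finset.sum_image (fun p _ p' _ h => by
      have := congrArg τ h; rwa [hτσ, hτσ] at this)]
  apply Finset.sum_subset
  · intro q hq; rcases Finset.mem_image.mp hq with ⟨p, hp, rfl⟩; exact himg p hp
  · intro q hq hq'
    refine hz q hq fun hτ => hq' (Finset.mem_image.mpr ⟨τ q, hτ, hστ q⟩)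

/-- `J 0` annihilates every vector of the vacuum representation. -/
private lemma j0_zero {V : Type*} [NormedAddCommGroup V] [InnerProductSpace ℂ V]
    (J : ℤ → Module.End ℂ V) (Ω : V)
    (hJJ : ∀ m n : ℤ, ∀ v : V,
      J m (J n v) - J n (J m v) = if m + n = 0 then (m : ℂ) • v else 0)
    (hΩann : ∀ n : ℤ, 0 ≤ n → J n Ω = 0)
    (hspan : Submodule.span ℂ
      {v : V | ∃ l : List ℕ, (∀ m ∈ l, 1 ≤ m) ∧
        v = (l.map fun m => J (-(m : ℤ))).prod Ω} = ⊤) :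
    ∀ v : V, J 0 v = 0 := by
  have hcomm : ∀ (n : ℤ) (v : V), J 0 (J n v) = J n (J 0 v) := by
    intro n v
    have h := hJJ 0 n v
    have h2 : (if (0 : ℤ) + n = 0 then ((0 : ℤ) : ℂ) • v else 0) = 0 := by
      split <;> simp
    rw [h2] at h
    exact sub_eq_zero.mp h
  have hgen : ∀ l : List ℤ, J 0 ((l.map fun m => J (-m)).prod Ω) = 0 := by
    intro l
    induction l with
    | nil => simpa using hΩann 0 le_rfl
    | cons a l ih =>
      rw [List.map_cons, List.prod_cons, Module.End.mul_apply, hcomm, ih, map_zero]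
  have hle : Submodule.span ℂ
      {v : V | ∃ l : List ℕ, (∀ m ∈ l, 1 ≤ m) ∧
        v = (l.map fun m => J (-(m : ℤ))).prod Ω} ≤ LinearMap.ker (J 0) := by
    rw [Submodule.span_le]
    rintro v ⟨l, -, rfl⟩
    exact hgen _
  intro v
  have : v ∈ LinearMap.ker (J 0) := hle (hspan ▸ Submodule.mem_top)
  exact this

/-- `Σ_{n∈ℤ} ⟨Ψ, L_n Φ⟩ = (1/2)⟨J₋J₋Ψ, Φ⟩ + (1/2)⟨Ψ, J₋J₋Φ⟩ + ⟨J₋Ψ, J₋Φ⟩`,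
where for `n < 0` the term of the left-hand sum is interpreted as `⟨L_{−n}Ψ, Φ⟩`. -/
theorem stmt_10 {V : Type*} [NormedAddCommGroup V] [InnerProductSpace ℂ V]
    (J : ℤ → Module.End ℂ V) (Ω : V)
    (hJJ : ∀ m n : ℤ, ∀ v : V,
      J m (J n v) - J n (J m v) = if m + n = 0 then (m : ℂ) • v else 0)
    (hadj : ∀ (m : ℤ) (ψ φ : V), ⟪J m ψ, φ⟫_ℂ = ⟪ψ, J (-m) φ⟫_ℂ)
    (hΩ : ‖Ω‖ = 1)
    (hΩann : ∀ n : ℤ, 0 ≤ n → J n Ω = 0)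
    (hspan : Submodule.span ℂ
      {v : V | ∃ l : List ℕ, (∀ m ∈ l, 1 ≤ m) ∧
        v = (l.map fun m => J (-(m : ℤ))).prod Ω} = ⊤)
    (hlf : ∀ v : V, ∃ N : ℤ, ∀ m : ℤ, N ≤ m → J m v = 0)
    (Ψ Φ : V) :
    (∑ᶠ n : ℤ, if 0 ≤ n then ⟪Ψ, sugawara J n Φ⟫_ℂ else ⟪sugawara J (-n) Ψ, Φ⟫_ℂ)
      = (1 / 2) * ⟪Jminus J (Jminus J Ψ), Φ⟫_ℂ
        + (1 / 2) * ⟪Ψ, Jminus J (Jminus J Φ)⟫_ℂ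
        + ⟪Jminus J Ψ, Jminus J Φ⟫_ℂ := by
  classical
  have hcom : ∀ (m n : ℤ) (v : V), m + n ≠ 0 → J m (J n v) = J n (J m v) := by
    intro m n v h
    have h2 := hJJ m n v
    rw [if_neg h] at h2
    exact sub_eq_zero.mp h2
  have hJ0 : ∀ v : V, J 0 v = 0 := j0_zero J Ω hJJ hΩann hspan
  obtain ⟨N₁, hN₁⟩ := hlf Ψ
  obtain ⟨N₂, hN₂⟩ := hlf Φ
  set N : ℤ := max 1 (max N₁ N₂) with hNdef
  have hN1 : 1 ≤ N := le_max_left _ _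
  have hNΨ : ∀ m : ℤ, N ≤ m → J m Ψ = 0 := fun m hm =>
    hN₁ m (le_trans (le_trans (le_max_left N₁ N₂) (le_max_right 1 _)) hm)
  have hNΦ : ∀ m : ℤ, N ≤ m → J m Φ = 0 := fun m hm =>
    hN₂ m (le_trans (le_trans (le_max_right N₁ N₂) (le_max_right 1 _)) hm)
  set T : ℤ → ℤ → ℂ := fun a b => ⟪Ψ, J a (J b Φ)⟫_ℂ with hT
  have hmove : ∀ (a : ℤ) (x : V), ⟪Ψ, J a x⟫_ℂ = ⟪J (-a) Ψ, x⟫_ℂ := by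
    intro a x
    rw [hadj (-a) Ψ x, neg_neg]
  have hTa : ∀ a b : ℤ, a ≤ -N → T a b = 0 := by
    intro a b h
    simp only [hT]
    rw [hmove, hNΨ (-a) (by omega), inner_zero_left]
  have hTb : ∀ a b : ℤ, N ≤ b → T a b = 0 := by
    intro a b h
    simp only [hT]
    rw [hNΦ b h, map_zero, inner_zero_right]
  have hTc : ∀ a b : ℤ, a + b ≠ 0 → N ≤ a → T a b = 0 := by
    intro a b h ha
    simp only [hT]
    rw [hcom a b Φ h, hNΦ a ha, map_zero, inner_zero_right]
  have hTd : ∀ a b : ℤ, a + b ≠ 0 → b ≤ -N → T a b = 0 := by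
    intro a b h hb
    simp only [hT]
    rw [hmove a, ← neg_neg b, ← hadj (-b), hcom (-b) (-a) Ψ (by omega),
      hNΨ (-b) (by omega), map_zero, inner_zero_left]
  have hT0a : ∀ b : ℤ, T 0 b = 0 := by
    intro b; simp only [hT]; rw [hJ0, inner_zero_right]
  have hT0b : ∀ a : ℤ, T a 0 = 0 := by
    intro a; simp only [hT]; rw [hJ0 Φ, map_zero, inner_zero_right]
  have hTA : ∀ a b : ℤ, ⟪J a (J b Ψ), Φ⟫_ℂ = T (-b) (-a) := by
    intro a b; simp only [hT]; rw [hadj a, hadj b]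
  have hTB : ∀ a b : ℤ, ⟪J a Ψ, J b Φ⟫_ℂ = T (-a) b := by
    intro a b; simp only [hT]; rw [hadj a]
  -- finite form of the Sugawara operator
  have hsug : ∀ (v : V), (∀ m : ℤ, N ≤ m → J m v = 0) → ∀ n : ℤ, 0 ≤ n →
      sugawara J n v = ((1:ℂ)/2) • ∑ k ∈ Finset.Ioo (n - N) N,
        (if -1 < k then J (n - k) (J k v) else J k (J (n - k) v)) := by
    intro v hv n hn
    unfold sugawara
    congr 1
    apply finsum_eq_sum_of_support_subset
    intro k hk
    simp only [Function.mem_support] at hk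
    simp only [Finset.coe_Ioo, Set.mem_Ioo]
    constructor
    · by_contra hlt
      push_neg at hlt
      by_cases hk1 : -1 < k
      · exact hk (by rw [if_pos hk1, hcom (n - k) k v (by omega), hv (n - k) (by omega),
          map_zero])
      · exact hk (by rw [if_neg hk1, hv (n - k) (by omega), map_zero])
    · by_contra hlt
      push_neg at hlt
      exact hk (by rw [if_pos (by omega), hv k hlt, map_zero])
  have hA : ∀ n : ℤ, 0 ≤ n → ⟪Ψ, sugawara J n Φ⟫_ℂ =
      ((1:ℂ)/2) * ∑ k ∈ Finset.Ioo (n - N) N,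
        (if -1 < k then T (n - k) k else T k (n - k)) := by
    intro n hn
    rw [hsug Φ hNΦ n hn, inner_smul_right, inner_sum]
    congr 1
    refine Finset.sum_congr rfl fun k _ => ?_
    rw [apply_ite (fun x : V => ⟪Ψ, x⟫_ℂ)]
    try simp only [hT]
  have hB : ∀ m : ℤ, 0 ≤ m → ⟪sugawara J m Ψ, Φ⟫_ℂ =
      ((1:ℂ)/2) * ∑ k ∈ Finset.Ioo (m - N) N,
        (if -1 < k then T (-k) (k - m) else T (k - m) (-k)) := by
    intro m hm
    rw [hsug Ψ hNΨ m hm, inner_smul_left, sum_inner, map_div₀, map_one, Complex.conj_ofNat]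
    congr 1
    refine Finset.sum_congr rfl fun k _ => ?_
    rw [apply_ite (fun x : V => ⟪x, Φ⟫_ℂ), hTA, hTA]
    try rw [neg_sub]
  -- outer sum over a finite range
  have hLHS1 : (∑ᶠ n : ℤ, if 0 ≤ n then ⟪Ψ, sugawara J n Φ⟫_ℂ else ⟪sugawara J (-n) Ψ, Φ⟫_ℂ)
      = ∑ n ∈ Finset.Ioo (-(2 * N)) (2 * N),
          (if 0 ≤ n then ⟪Ψ, sugawara J n Φ⟫_ℂ else ⟪sugawara J (-n) Ψ, Φ⟫_ℂ) := by
    apply finsum_eq_sum_of_support_subset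
    intro n hn
    simp only [Function.mem_support] at hn
    simp only [Finset.coe_Ioo, Set.mem_Ioo]
    constructor
    · by_contra h
      push_neg at h
      exact hn (by rw [if_neg (by omega), hB (-n) (by omega),
        Finset.Ioo_eq_empty (by omega), Finset.sum_empty, mul_zero])
    · by_contra h
      push_neg at h
      exact hn (by rw [if_pos (by omega), hA n (by omega),
        Finset.Ioo_eq_empty (by omega), Finset.sum_empty, mul_zero])
  set F : ℤ → ℤ → ℂ := fun n k => if 0 ≤ n then (if -1 < k then T (n - k) k else T k (n - k))
      else (if -1 < k then T (-k) (k + n) else T (k + n) (-k)) with hF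
  have hrow : ∀ n ∈ Finset.Ioo (-(2 * N)) (2 * N),
      (if 0 ≤ n then ⟪Ψ, sugawara J n Φ⟫_ℂ else ⟪sugawara J (-n) Ψ, Φ⟫_ℂ)
      = ((1:ℂ)/2) * ∑ k ∈ Finset.Ioo (-(4 * N)) (4 * N), F n k := by
    intro n hn
    rw [Finset.mem_Ioo] at hn
    by_cases h0 : 0 ≤ n
    · rw [if_pos h0, hA n h0]
      congr 1
      have hsub : Finset.Ioo (n - N) N ⊆ Finset.Ioo (-(4 * N)) (4 * N) :=
        Finset.Ioo_subset_Ioo (by omega) (by omega)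
      have h1 : ∑ k ∈ Finset.Ioo (n - N) N, (if -1 < k then T (n - k) k else T k (n - k))
          = ∑ k ∈ Finset.Ioo (-(4 * N)) (4 * N),
              (if -1 < k then T (n - k) k else T k (n - k)) := by
        apply Finset.sum_subset hsub
        intro k hk hk'
        rw [Finset.mem_Ioo] at hk
        rw [Finset.mem_Ioo, not_and_or, not_lt, not_lt] at hk'
        by_cases hk1 : -1 < k
        · rw [if_pos hk1]
          rcases hk' with h | h
          · exact hTc (n - k) k (by omega) (by omega)
          · exact hTb _ _ h
        · rw [if_neg hk1]
          rcases hk' with h | h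
          · exact hTb _ _ (by omega)
          · exact absurd h (by omega)
      rw [h1]
      exact Finset.sum_congr rfl fun k _ => by simp only [hF, if_pos h0]
    · rw [if_neg h0, hB (-n) (by omega)]
      congr 1
      simp only [sub_neg_eq_add]
      have hsub : Finset.Ioo (-n - N) N ⊆ Finset.Ioo (-(4 * N)) (4 * N) :=
        Finset.Ioo_subset_Ioo (by omega) (by omega)
      have h1 : ∑ k ∈ Finset.Ioo (-n - N) N, (if -1 < k then T (-k) (k + n) else T (k + n) (-k))
          = ∑ k ∈ Finset.Ioo (-(4 * N)) (4 * N),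
              (if -1 < k then T (-k) (k + n) else T (k + n) (-k)) := by
        apply Finset.sum_subset hsub
        intro k hk hk'
        rw [Finset.mem_Ioo] at hk
        rw [Finset.mem_Ioo, not_and_or, not_lt, not_lt] at hk'
        by_cases hk1 : -1 < k
        · rw [if_pos hk1]
          rcases hk' with h | h
          · exact hTd (-k) (k + n) (by omega) (by omega)
          · exact hTa _ _ (by omega)
        · rw [if_neg hk1]
          rcases hk' with h | h
          · exact hTa _ _ (by omega)
          · exact absurd h (by omega)
      rw [h1]
      exact Finset.sum_congr rfl fun k _ => by simp only [hF, if_neg h0]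
  have hFsplit : ∀ p : ℤ × ℤ, F p.1 p.2 =
      (if 0 ≤ p.1 ∧ -1 < p.2 then T (p.1 - p.2) p.2 else 0)
      + ((if 0 ≤ p.1 ∧ ¬(-1 < p.2) then T p.2 (p.1 - p.2) else 0)
      + ((if ¬(0 ≤ p.1) ∧ -1 < p.2 then T (-p.2) (p.2 + p.1) else 0)
      + (if ¬(0 ≤ p.1) ∧ ¬(-1 < p.2) then T (p.2 + p.1) (-p.2) else 0))) := by
    intro p
    simp only [hF]
    by_cases h1 : 0 ≤ p.1 <;> by_cases h2 : -1 < p.2 <;> simp [h1, h2]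
  -- the four reindexed pieces
  have hS1 : ∑ p ∈ (Finset.Ioo (-(2 * N)) (2 * N)) ×ˢ (Finset.Ioo (-(4 * N)) (4 * N)),
        (if 0 ≤ p.1 ∧ -1 < p.2 then T (p.1 - p.2) p.2 else 0)
      = ∑ q ∈ (Finset.Ioo (-(8 * N)) (8 * N)) ×ˢ (Finset.Ioo (-(8 * N)) (8 * N)),
        (if 0 ≤ q.1 + q.2 ∧ 0 ≤ q.2 then T q.1 q.2 else 0) := by
    apply sum_reindex (fun p => (p.1 - p.2, p.2)) (fun q => (q.1 + q.2, q.2))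
    · intro p _
      exact if_congr (by omega) rfl rfl
    · intro p
      obtain ⟨x, y⟩ := p
      simp only [Prod.mk.injEq, and_true, true_and, neg_neg]
      try omega
    · intro q
      obtain ⟨a, b⟩ := q
      simp only [Prod.mk.injEq, and_true, true_and, neg_neg]
      try omega
    · intro p hp
      rw [Finset.mem_product, Finset.mem_Ioo, Finset.mem_Ioo] at hp
      rw [Finset.mem_product, Finset.mem_Ioo, Finset.mem_Ioo]
      omega
    · intro q hq hq'
      rw [Finset.mem_product, Finset.mem_Ioo, Finset.mem_Ioo] at hq
      rw [Finset.mem_product, not_and_or, Finset.mem_Ioo, Finset.mem_Ioo,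
        not_and_or, not_and_or, not_lt, not_lt, not_lt, not_lt] at hq'
      split_ifs with hc
      · have hcase : 2 * N ≤ q.1 + q.2 ∨ 4 * N ≤ q.2 := by omega
        rcases hcase with h | h
        · by_cases hb : N ≤ q.2
          · exact hTb _ _ hb
          · exact hTc q.1 q.2 (by omega) (by omega)
        · exact hTb _ _ (by omega)
      · rfl
  have hS2 : ∑ p ∈ (Finset.Ioo (-(2 * N)) (2 * N)) ×ˢ (Finset.Ioo (-(4 * N)) (4 * N)),
        (if 0 ≤ p.1 ∧ ¬(-1 < p.2) then T p.2 (p.1 - p.2) else 0)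
      = ∑ q ∈ (Finset.Ioo (-(8 * N)) (8 * N)) ×ˢ (Finset.Ioo (-(8 * N)) (8 * N)),
        (if 0 ≤ q.1 + q.2 ∧ q.1 ≤ -1 then T q.1 q.2 else 0) := by
    apply sum_reindex (fun p => (p.2, p.1 - p.2)) (fun q => (q.1 + q.2, q.1))
    · intro p _
      exact if_congr (by omega) rfl rfl
    · intro p
      obtain ⟨x, y⟩ := p
      simp only [Prod.mk.injEq, and_true, true_and, neg_neg]
      try omega
    · intro q
      obtain ⟨a, b⟩ := q
      simp only [Prod.mk.injEq, and_true, true_and, neg_neg]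
      try omega
    · intro p hp
      rw [Finset.mem_product, Finset.mem_Ioo, Finset.mem_Ioo] at hp
      rw [Finset.mem_product, Finset.mem_Ioo, Finset.mem_Ioo]
      omega
    · intro q hq hq'
      rw [Finset.mem_product, Finset.mem_Ioo, Finset.mem_Ioo] at hq
      rw [Finset.mem_product, not_and_or, Finset.mem_Ioo, Finset.mem_Ioo,
        not_and_or, not_and_or, not_lt, not_lt, not_lt, not_lt] at hq'
      split_ifs with hc
      · have hcase : 2 * N ≤ q.1 + q.2 ∨ q.1 ≤ -(4 * N) := by omega
        rcases hcase with h | h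
        · by_cases hb : N ≤ q.2
          · exact hTb _ _ hb
          · exact hTc q.1 q.2 (by omega) (by omega)
        · exact hTa _ _ (by omega)
      · rfl
  have hS3 : ∑ p ∈ (Finset.Ioo (-(2 * N)) (2 * N)) ×ˢ (Finset.Ioo (-(4 * N)) (4 * N)),
        (if ¬(0 ≤ p.1) ∧ -1 < p.2 then T (-p.2) (p.2 + p.1) else 0)
      = ∑ q ∈ (Finset.Ioo (-(8 * N)) (8 * N)) ×ˢ (Finset.Ioo (-(8 * N)) (8 * N)),
        (if q.1 + q.2 ≤ -1 ∧ q.1 ≤ 0 then T q.1 q.2 else 0) := by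
    apply sum_reindex (fun p => (-p.2, p.2 + p.1)) (fun q => (q.1 + q.2, -q.1))
    · intro p _
      exact if_congr (by omega) rfl rfl
    · intro p
      obtain ⟨x, y⟩ := p
      simp only [Prod.mk.injEq, and_true, true_and, neg_neg]
      try omega
    · intro q
      obtain ⟨a, b⟩ := q
      simp only [Prod.mk.injEq, and_true, true_and, neg_neg]
      try omega
    · intro p hp
      rw [Finset.mem_product, Finset.mem_Ioo, Finset.mem_Ioo] at hp
      rw [Finset.mem_product, Finset.mem_Ioo, Finset.mem_Ioo]
      omega
    · intro q hq hq'
      rw [Finset.mem_product, Finset.mem_Ioo, Finset.mem_Ioo] at hq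
      rw [Finset.mem_product, not_and_or, Finset.mem_Ioo, Finset.mem_Ioo,
        not_and_or, not_and_or, not_lt, not_lt, not_lt, not_lt] at hq'
      split_ifs with hc
      · have hcase : q.1 + q.2 ≤ -(2 * N) ∨ q.1 ≤ -(4 * N) := by omega
        rcases hcase with h | h
        · by_cases hb : q.2 ≤ -N
          · exact hTd q.1 q.2 (by omega) hb
          · exact hTa _ _ (by omega)
        · exact hTa _ _ (by omega)
      · rfl
  have hS4 : ∑ p ∈ (Finset.Ioo (-(2 * N)) (2 * N)) ×ˢ (Finset.Ioo (-(4 * N)) (4 * N)),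
        (if ¬(0 ≤ p.1) ∧ ¬(-1 < p.2) then T (p.2 + p.1) (-p.2) else 0)
      = ∑ q ∈ (Finset.Ioo (-(8 * N)) (8 * N)) ×ˢ (Finset.Ioo (-(8 * N)) (8 * N)),
        (if q.1 + q.2 ≤ -1 ∧ 1 ≤ q.2 then T q.1 q.2 else 0) := by
    apply sum_reindex (fun p => (p.2 + p.1, -p.2)) (fun q => (q.1 + q.2, -q.2))
    · intro p _
      exact if_congr (by omega) rfl rfl
    · intro p
      obtain ⟨x, y⟩ := p
      simp only [Prod.mk.injEq, and_true, true_and, neg_neg]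
      try omega
    · intro q
      obtain ⟨a, b⟩ := q
      simp only [Prod.mk.injEq, and_true, true_and, neg_neg]
      try omega
    · intro p hp
      rw [Finset.mem_product, Finset.mem_Ioo, Finset.mem_Ioo] at hp
      rw [Finset.mem_product, Finset.mem_Ioo, Finset.mem_Ioo]
      omega
    · intro q hq hq'
      rw [Finset.mem_product, Finset.mem_Ioo, Finset.mem_Ioo] at hq
      rw [Finset.mem_product, not_and_or, Finset.mem_Ioo, Finset.mem_Ioo,
        not_and_or, not_and_or, not_lt, not_lt, not_lt, not_lt] at hq'
      split_ifs with hc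
      · have hcase : q.1 + q.2 ≤ -(2 * N) ∨ 4 * N ≤ q.2 := by omega
        rcases hcase with h | h
        · exact hTa _ _ (by omega)
        · exact hTb _ _ (by omega)
      · rfl
  -- right-hand side pieces
  have hJm : ∀ (v : V), (∀ m : ℤ, N ≤ m → J m v = 0) →
      Jminus J v = ∑ k ∈ Finset.Ioo 0 N, J k v := by
    intro v hv
    unfold Jminus
    have h1 : (∑ᶠ n : ℤ, if 0 < n then J n v else 0)
        = ∑ k ∈ Finset.Ioo 0 N, (if 0 < k then J k v else 0) := by
      apply finsum_eq_sum_of_support_subset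
      intro k hk
      simp only [Function.mem_support] at hk
      simp only [Finset.coe_Ioo, Set.mem_Ioo]
      constructor
      · by_contra h
        push_neg at h
        exact hk (if_neg (by omega))
      · by_contra h
        push_neg at h
        exact hk (by rw [if_pos (by omega), hv k (by omega)])
    rw [h1]
    refine Finset.sum_congr rfl fun k hk => ?_
    rw [Finset.mem_Ioo] at hk
    rw [if_pos hk.1]
  have hdbl : ∀ (v : V), (∀ m : ℤ, N ≤ m → J m v = 0) →
      Jminus J (Jminus J v) = ∑ n ∈ Finset.Ioo 0 N, ∑ k ∈ Finset.Ioo 0 N, J n (J k v) := by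
    intro v hv
    rw [hJm v hv]
    unfold Jminus
    have h1 : (∑ᶠ n : ℤ, if 0 < n then J n (∑ k ∈ Finset.Ioo 0 N, J k v) else 0)
        = ∑ n ∈ Finset.Ioo 0 N, (if 0 < n then J n (∑ k ∈ Finset.Ioo 0 N, J k v) else 0) := by
      apply finsum_eq_sum_of_support_subset
      intro n hn
      simp only [Function.mem_support] at hn
      simp only [Finset.coe_Ioo, Set.mem_Ioo]
      constructor
      · by_contra h
        push_neg at h
        exact hn (if_neg (by omega))
      · by_contra h
        push_neg at h
        apply hn
        rw [if_pos (by omega), map_sum]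
        apply Finset.sum_eq_zero
        intro k hk
        rw [Finset.mem_Ioo] at hk
        rw [hcom n k v (by omega), hv n (by omega), map_zero]
    rw [h1]
    refine Finset.sum_congr rfl fun n hn => ?_
    rw [Finset.mem_Ioo] at hn
    rw [if_pos hn.1, map_sum]
  have hR1 : ⟪Jminus J (Jminus J Ψ), Φ⟫_ℂ
      = ∑ p ∈ (Finset.Ioo (0:ℤ) N) ×ˢ (Finset.Ioo (0:ℤ) N), T (-p.2) (-p.1) := by
    rw [hdbl Ψ hNΨ,
      Finset.sum_product (Finset.Ioo (0:ℤ) N) (Finset.Ioo (0:ℤ) N)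
        (fun p => T (-p.2) (-p.1)), sum_inner]
    refine Finset.sum_congr rfl fun n _ => ?_
    rw [sum_inner]
    exact Finset.sum_congr rfl fun k _ => hTA n k
  have hR2 : ⟪Ψ, Jminus J (Jminus J Φ)⟫_ℂ
      = ∑ p ∈ (Finset.Ioo (0:ℤ) N) ×ˢ (Finset.Ioo (0:ℤ) N), T p.1 p.2 := by
    rw [hdbl Φ hNΦ,
      Finset.sum_product (Finset.Ioo (0:ℤ) N) (Finset.Ioo (0:ℤ) N)
        (fun p => T p.1 p.2), inner_sum]
    refine Finset.sum_congr rfl fun n _ => ?_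
    rw [inner_sum]
    try exact Finset.sum_congr rfl fun k _ => by simp only [hT]
  have hR3 : ⟪Jminus J Ψ, Jminus J Φ⟫_ℂ
      = ∑ p ∈ (Finset.Ioo (0:ℤ) N) ×ˢ (Finset.Ioo (0:ℤ) N), T (-p.1) p.2 := by
    rw [hJm Ψ hNΨ, hJm Φ hNΦ,
      Finset.sum_product (Finset.Ioo (0:ℤ) N) (Finset.Ioo (0:ℤ) N)
        (fun p => T (-p.1) p.2), sum_inner]
    refine Finset.sum_congr rfl fun n _ => ?_
    rw [inner_sum]
    exact Finset.sum_congr rfl fun k _ => hTB n k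
  have hR1Q : ∑ p ∈ (Finset.Ioo (0:ℤ) N) ×ˢ (Finset.Ioo (0:ℤ) N), T (-p.2) (-p.1)
      = ∑ q ∈ (Finset.Ioo (-(8 * N)) (8 * N)) ×ˢ (Finset.Ioo (-(8 * N)) (8 * N)),
        (if q.1 ≤ -1 ∧ q.2 ≤ -1 then T q.1 q.2 else 0) := by
    apply sum_reindex (fun p => (-p.2, -p.1)) (fun q => (-q.2, -q.1))
    · intro p hp
      rw [Finset.mem_product, Finset.mem_Ioo, Finset.mem_Ioo] at hp
      rw [if_pos (by constructor <;> [omega; omega])]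
    · intro p
      obtain ⟨x, y⟩ := p
      simp only [Prod.mk.injEq, and_true, true_and, neg_neg]
      try omega
    · intro q
      obtain ⟨a, b⟩ := q
      simp only [Prod.mk.injEq, and_true, true_and, neg_neg]
      try omega
    · intro p hp
      rw [Finset.mem_product, Finset.mem_Ioo, Finset.mem_Ioo] at hp
      rw [Finset.mem_product, Finset.mem_Ioo, Finset.mem_Ioo]
      omega
    · intro q hq hq'
      rw [Finset.mem_product, Finset.mem_Ioo, Finset.mem_Ioo] at hq
      rw [Finset.mem_product, not_and_or, Finset.mem_Ioo, Finset.mem_Ioo,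
        not_and_or, not_and_or, not_lt, not_lt, not_lt, not_lt] at hq'
      split_ifs with hc
      · have hcase : N ≤ -q.2 ∨ N ≤ -q.1 := by omega
        rcases hcase with h | h
        · exact hTd q.1 q.2 (by omega) (by omega)
        · exact hTa _ _ (by omega)
      · rfl
  have hR2Q : ∑ p ∈ (Finset.Ioo (0:ℤ) N) ×ˢ (Finset.Ioo (0:ℤ) N), T p.1 p.2
      = ∑ q ∈ (Finset.Ioo (-(8 * N)) (8 * N)) ×ˢ (Finset.Ioo (-(8 * N)) (8 * N)),
        (if 1 ≤ q.1 ∧ 1 ≤ q.2 then T q.1 q.2 else 0) := by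
    apply sum_reindex (fun p => p) (fun q => q)
    · intro p hp
      rw [Finset.mem_product, Finset.mem_Ioo, Finset.mem_Ioo] at hp
      rw [if_pos (by constructor <;> [omega; omega])]
    · intro p
      rfl
    · intro q
      rfl
    · intro p hp
      rw [Finset.mem_product, Finset.mem_Ioo, Finset.mem_Ioo] at hp
      rw [Finset.mem_product, Finset.mem_Ioo, Finset.mem_Ioo]
      omega
    · intro q hq hq'
      rw [Finset.mem_product, Finset.mem_Ioo, Finset.mem_Ioo] at hq
      rw [Finset.mem_product, not_and_or, Finset.mem_Ioo, Finset.mem_Ioo,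
        not_and_or, not_and_or, not_lt, not_lt, not_lt, not_lt] at hq'
      split_ifs with hc
      · have hcase : N ≤ q.1 ∨ N ≤ q.2 := by omega
        rcases hcase with h | h
        · exact hTc q.1 q.2 (by omega) h
        · exact hTb _ _ h
      · rfl
  have hR3Q : ∑ p ∈ (Finset.Ioo (0:ℤ) N) ×ˢ (Finset.Ioo (0:ℤ) N), T (-p.1) p.2
      = ∑ q ∈ (Finset.Ioo (-(8 * N)) (8 * N)) ×ˢ (Finset.Ioo (-(8 * N)) (8 * N)),
        (if q.1 ≤ -1 ∧ 1 ≤ q.2 then T q.1 q.2 else 0) := by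
    apply sum_reindex (fun p => (-p.1, p.2)) (fun q => (-q.1, q.2))
    · intro p hp
      rw [Finset.mem_product, Finset.mem_Ioo, Finset.mem_Ioo] at hp
      rw [if_pos (by constructor <;> [omega; omega])]
    · intro p
      obtain ⟨x, y⟩ := p
      simp only [Prod.mk.injEq, and_true, true_and, neg_neg]
      try omega
    · intro q
      obtain ⟨a, b⟩ := q
      simp only [Prod.mk.injEq, and_true, true_and, neg_neg]
      try omega
    · intro p hp
      rw [Finset.mem_product, Finset.mem_Ioo, Finset.mem_Ioo] at hp
      rw [Finset.mem_product, Finset.mem_Ioo, Finset.mem_Ioo]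
      omega
    · intro q hq hq'
      rw [Finset.mem_product, Finset.mem_Ioo, Finset.mem_Ioo] at hq
      rw [Finset.mem_product, not_and_or, Finset.mem_Ioo, Finset.mem_Ioo,
        not_and_or, not_and_or, not_lt, not_lt, not_lt, not_lt] at hq'
      split_ifs with hc
      · have hcase : N ≤ -q.1 ∨ N ≤ q.2 := by omega
        rcases hcase with h | h
        · exact hTa _ _ (by omega)
        · exact hTb _ _ h
      · rfl
  -- pointwise identity of coefficients
  have hkey : ∀ q : ℤ × ℤ,
      (if 0 ≤ q.1 + q.2 ∧ 0 ≤ q.2 then T q.1 q.2 else 0)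
      + ((if 0 ≤ q.1 + q.2 ∧ q.1 ≤ -1 then T q.1 q.2 else 0)
      + ((if q.1 + q.2 ≤ -1 ∧ q.1 ≤ 0 then T q.1 q.2 else 0)
      + (if q.1 + q.2 ≤ -1 ∧ 1 ≤ q.2 then T q.1 q.2 else 0)))
      = (if q.1 ≤ -1 ∧ q.2 ≤ -1 then T q.1 q.2 else 0)
        + (if 1 ≤ q.1 ∧ 1 ≤ q.2 then T q.1 q.2 else 0)
        + 2 * (if q.1 ≤ -1 ∧ 1 ≤ q.2 then T q.1 q.2 else 0) := by
    rintro ⟨a, b⟩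
    dsimp only
    by_cases ha : a = 0
    · subst ha
      simp [hT0a]
    · by_cases hb : b = 0
      · subst hb
        simp [hT0b]
      · split_ifs <;> first | ring1 | (exfalso; omega)
  -- assemble everything
  rw [hLHS1, Finset.sum_congr rfl hrow, ← Finset.mul_sum,
    ← Finset.sum_product' (Finset.Ioo (-(2 * N)) (2 * N)) (Finset.Ioo (-(4 * N)) (4 * N))
      (fun n k => F n k),
    Finset.sum_congr rfl (fun p _ => hFsplit p),
    Finset.sum_add_distrib, Finset.sum_add_distrib, Finset.sum_add_distrib,
    hS1, hS2, hS3, hS4, hR1, hR2, hR3, hR1Q, hR2Q, hR3Q,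
    ← Finset.sum_add_distrib, ← Finset.sum_add_distrib, ← Finset.sum_add_distrib,
    Finset.sum_congr rfl (fun q _ => hkey q),
    Finset.sum_add_distrib, Finset.sum_add_distrib, ← Finset.mul_sum]
  ring
end

section
/- Let V, (J_n)_{n∈ℤ}, Ω be the vacuum representation of the U(1)-current algebra and let (L_n)_{n∈ℤ} be the associated Sugawara operators; write J₋ψ := Σ_{n>0} J_n ψ (a finite sum on each vector). Then: (i) for every n ∈ ℕ and Ψ ∈ V with L_0 Ψ = nΨ, one has ‖J₋Ψ‖² = n·‖Ψ‖²; (ii) for every n ∈ ℕ and every Ψ in the sum of the eigenspaces ker(L_0 − k·id) for 0 ≤ k ≤ n, one has ‖J₋Ψ‖ ≤ n·‖Ψ‖. -/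
open scoped InnerProductSpace

section Aux
variable {V : Type*} [AddCommGroup V] [Module ℂ V] {J : ℤ → Module.End ℂ V}

lemma J_comm (hJJ : ∀ m n : ℤ, ∀ v : V,
      J m (J n v) - J n (J m v) = if m + n = 0 then (m : ℂ) • v else 0)
    {m n : ℤ} (h : m + n ≠ 0) (v : V) : J m (J n v) = J n (J m v) := by
  have := hJJ m n v
  rw [if_neg h] at this
  exact sub_eq_zero.mp this

lemma J0_zero (hJJ : ∀ m n : ℤ, ∀ v : V,
      J m (J n v) - J n (J m v) = if m + n = 0 then (m : ℂ) • v else 0)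
    {Ω : V}
    (hΩann : ∀ n : ℤ, 0 ≤ n → J n Ω = 0)
    (hspan : Submodule.span ℂ
      {v : V | ∃ l : List ℕ, (∀ m ∈ l, 1 ≤ m) ∧
        v = (l.map fun m => J (-(m : ℤ))).prod Ω} = ⊤)
    (v : V) : J 0 v = 0 := by
  have hcomm : ∀ (n : ℤ) (w : V), J 0 (J n w) = J n (J 0 w) := by
    intro n w
    have := hJJ 0 n w
    by_cases h : (0 : ℤ) + n = 0
    · rw [if_pos h] at this
      simpa [sub_eq_zero] using this
    · rw [if_neg h] at this
      exact sub_eq_zero.mp this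
  have key : ∀ l : List ℤ, J 0 ((l.map J).prod Ω) = 0 := by
    intro l
    induction l with
    | nil => simpa using hΩann 0 le_rfl
    | cons a l ih =>
        rw [List.map_cons, List.prod_cons, Module.End.mul_apply, hcomm, ih, map_zero]
  have hv : v ∈ Submodule.span ℂ
      {v : V | ∃ l : List ℕ, (∀ m ∈ l, 1 ≤ m) ∧
        v = (l.map fun m => J (-(m : ℤ))).prod Ω} := by rw [hspan]; trivial
  induction hv using Submodule.span_induction with
  | mem x hx =>
      obtain ⟨l, -, rfl⟩ := hx
      have := key (l.map (fun m => -(m : ℤ)))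
      simpa [List.map_map, Function.comp_def] using this
  | zero => simp
  | add x y _ _ hx hy => rw [map_add, hx, hy, add_zero]
  | smul c x _ hx => rw [map_smul, hx, smul_zero]

lemma sugawara_zero_eq
    (hJ0 : ∀ v : V, J 0 v = 0)
    (v : V) (N : ℤ) (hN : 1 ≤ N) (h : ∀ m : ℤ, N ≤ m → J m v = 0) :
    sugawara J 0 v = ∑ k ∈ Finset.Ioo (0 : ℤ) N, J (-k) (J k v) := by
  set f : ℤ → V := fun k => if -1 < k then J (0 - k) (J k v) else J k (J (0 - k) v) with hf
  have hsupp : Function.support f ⊆ (Finset.Ioo (-N) N : Finset ℤ) := by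
    intro k hk
    simp only [Finset.coe_Ioo, Set.mem_Ioo]
    by_contra hc
    push_neg at hc
    apply hk
    by_cases hk1 : -1 < k
    · have hkN : N ≤ k := by
        rcases lt_or_ge k N with h1 | h2
        · exfalso; omega
        · exact h2
      simp [hf, hk1, h k hkN]
    · have : N ≤ -k := by omega
      simp [hf, hk1, zero_sub, h (-k) this]
  have heq : sugawara J 0 v = ((1:ℂ)/2) • ∑ k ∈ Finset.Ioo (-N) N, f k := by
    rw [sugawara, finsum_eq_finset_sum_of_support_subset f hsupp]
  have hsplit : Finset.Ioo (-N) N = Finset.Ioo (-N) 0 ∪ Finset.Ico 0 N := by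
    ext x; simp only [Finset.mem_Ioo, Finset.mem_union, Finset.mem_Ico]; omega
  have hdisj : Disjoint (Finset.Ioo (-N) 0) (Finset.Ico 0 N) := by
    rw [Finset.disjoint_left]
    intro x hx hx'
    simp only [Finset.mem_Ioo] at hx
    simp only [Finset.mem_Ico] at hx'
    omega
  have hins : Finset.Ico (0:ℤ) N = insert 0 (Finset.Ioo 0 N) := by
    ext x; simp only [Finset.mem_Ico, Finset.mem_insert, Finset.mem_Ioo]; omega
  have hneg : ∑ k ∈ Finset.Ioo (-N) (0:ℤ), f k = ∑ k ∈ Finset.Ioo (0:ℤ) N, f k := by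
    apply Finset.sum_nbij' (i := fun k => -k) (j := fun k => -k)
    · intro a ha; simp only [Finset.mem_Ioo] at *; omega
    · intro a ha; simp only [Finset.mem_Ioo] at *; omega
    · intro a _; ring
    · intro a _; ring
    · intro a ha
      simp only [Finset.mem_Ioo] at ha
      have h1 : ¬ (-1 : ℤ) < a := by omega
      have h2 : (-1 : ℤ) < -a := by omega
      simp [hf, h1, h2, zero_sub, neg_neg]
  have hf0 : f 0 = 0 := by simp [hf, hJ0]
  have hfpos : ∀ k ∈ Finset.Ioo (0:ℤ) N, f k = J (-k) (J k v) := by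
    intro k hk
    simp only [Finset.mem_Ioo] at hk
    have : (-1:ℤ) < k := by omega
    simp [hf, this, zero_sub]
  rw [heq, hsplit, Finset.sum_union hdisj, hins,
    Finset.sum_insert (by simp), hf0, hneg, zero_add]
  rw [Finset.sum_congr rfl hfpos]
  rw [← two_smul ℂ, smul_smul]
  norm_num

lemma Jminus_eq (v : V) (N : ℤ) (h : ∀ m : ℤ, N ≤ m → J m v = 0) :
    Jminus J v = ∑ m ∈ Finset.Ioo (0 : ℤ) N, J m v := by
  set g : ℤ → V := fun m => if 0 < m then J m v else 0 with hg
  have hsupp : Function.support g ⊆ (Finset.Ioo (0:ℤ) N : Finset ℤ) := by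
    intro m hm
    simp only [Finset.coe_Ioo, Set.mem_Ioo]
    by_contra hc
    push_neg at hc
    apply hm
    by_cases h0 : 0 < m
    · exact by simp [hg, h0, h m (hc h0)]
    · simp [hg, h0]
  rw [Jminus, finsum_eq_finset_sum_of_support_subset g hsupp]
  apply Finset.sum_congr rfl
  intro m hm
  simp only [Finset.mem_Ioo] at hm
  simp [hg, hm.1]

end Aux

section Main
variable {V : Type*} [NormedAddCommGroup V] [InnerProductSpace ℂ V] {J : ℤ → Module.End ℂ V}

lemma L0_symm
    (hadj : ∀ (m : ℤ) (ψ φ : V), ⟪J m ψ, φ⟫_ℂ = ⟪ψ, J (-m) φ⟫_ℂ)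
    (hJ0 : ∀ v : V, J 0 v = 0)
    (hlf : ∀ v : V, ∃ N : ℤ, ∀ m : ℤ, N ≤ m → J m v = 0)
    (u v : V) : ⟪sugawara J 0 u, v⟫_ℂ = ⟪u, sugawara J 0 v⟫_ℂ := by
  obtain ⟨N₁, h₁⟩ := hlf u
  obtain ⟨N₂, h₂⟩ := hlf v
  set N := max 1 (max N₁ N₂) with hN
  have hN1 : 1 ≤ N := le_max_left _ _
  rw [sugawara_zero_eq hJ0 u N hN1 (fun m hm => h₁ m (le_trans (le_trans (le_max_left _ _) (le_max_right _ _)) hm)),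
    sugawara_zero_eq hJ0 v N hN1 (fun m hm => h₂ m (le_trans (le_trans (le_max_right _ _) (le_max_right _ _)) hm)),
    sum_inner, inner_sum]
  apply Finset.sum_congr rfl
  intro k _
  have e1 : ⟪J (-k) (J k u), v⟫_ℂ = ⟪J k u, J k v⟫_ℂ := by
    rw [hadj (-k)]; rw [neg_neg]
  rw [e1, hadj k]

lemma eigen_shift
    (hJJ : ∀ m n : ℤ, ∀ v : V,
      J m (J n v) - J n (J m v) = if m + n = 0 then (m : ℂ) • v else 0)
    (hJ0 : ∀ v : V, J 0 v = 0)
    (hlf : ∀ v : V, ∃ N : ℤ, ∀ m : ℤ, N ≤ m → J m v = 0)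
    {Ψ : V} {c : ℂ} {m : ℤ} (hm : 0 < m)
    (hΨ : sugawara J 0 Ψ = c • Ψ) :
    sugawara J 0 (J m Ψ) = (c - (m : ℂ)) • J m Ψ := by
  obtain ⟨N₁, h₁⟩ := hlf Ψ
  obtain ⟨N₂, h₂⟩ := hlf (J m Ψ)
  set N := max (max N₁ N₂) (m + 1) with hN
  have hN1 : 1 ≤ N := by have := le_max_right (max N₁ N₂) (m + 1); omega
  have hmN : m < N := by have := le_max_right (max N₁ N₂) (m + 1); omega
  have hb1 : ∀ k : ℤ, N ≤ k → J k Ψ = 0 := fun k hk =>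
    h₁ k (le_trans (le_trans (le_max_left _ _) (le_max_left _ _)) hk)
  have hb2 : ∀ k : ℤ, N ≤ k → J k (J m Ψ) = 0 := fun k hk =>
    h₂ k (le_trans (le_trans (le_max_right _ _) (le_max_left _ _)) hk)
  have e1 : sugawara J 0 Ψ = ∑ k ∈ Finset.Ioo (0 : ℤ) N, J (-k) (J k Ψ) :=
    sugawara_zero_eq hJ0 Ψ N hN1 hb1
  have e2 := sugawara_zero_eq hJ0 (J m Ψ) N hN1 hb2
  rw [e2]
  have term : ∀ k ∈ Finset.Ioo (0 : ℤ) N,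
      J (-k) (J k (J m Ψ)) =
        J m (J (-k) (J k Ψ)) + (if k = m then (-(m : ℤ) : ℂ) • J m Ψ else 0) := by
    intro k hk
    simp only [Finset.mem_Ioo] at hk
    have hc1 : J k (J m Ψ) = J m (J k Ψ) := J_comm hJJ (by omega) Ψ
    have hc2 := hJJ (-k) m (J k Ψ)
    rw [hc1]
    rw [sub_eq_iff_eq_add] at hc2
    rw [hc2, add_comm]
    congr 1
    by_cases hkm : k = m
    · subst hkm
      rw [if_pos (by ring), if_pos rfl]
      norm_num
    · rw [if_neg (by omega), if_neg hkm]
  rw [Finset.sum_congr rfl term, Finset.sum_add_distrib, Finset.sum_ite_eq',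
    if_pos (by simp only [Finset.mem_Ioo]; omega), ← map_sum, ← e1, hΨ, map_smul]
  rw [sub_smul]
  module

lemma ortho
    (hadj : ∀ (m : ℤ) (ψ φ : V), ⟪J m ψ, φ⟫_ℂ = ⟪ψ, J (-m) φ⟫_ℂ)
    (hJ0 : ∀ v : V, J 0 v = 0)
    (hlf : ∀ v : V, ∃ N : ℤ, ∀ m : ℤ, N ≤ m → J m v = 0)
    {u v : V} {a b : ℝ} (hab : a ≠ b)
    (hu : sugawara J 0 u = (a : ℂ) • u) (hv : sugawara J 0 v = (b : ℂ) • v) :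
    ⟪u, v⟫_ℂ = 0 := by
  have h := L0_symm hadj hJ0 hlf u v
  rw [hu, hv, inner_smul_left, inner_smul_right, Complex.conj_ofReal] at h
  have : ((a : ℂ) - b) * ⟪u, v⟫_ℂ = 0 := by ring_nf; linear_combination h
  rcases mul_eq_zero.mp this with h' | h'
  · exfalso; apply hab
    have : (a : ℂ) = b := by linear_combination h'
    exact_mod_cast this
  · exact h'

lemma part_i
    (hJJ : ∀ m n : ℤ, ∀ v : V,
      J m (J n v) - J n (J m v) = if m + n = 0 then (m : ℂ) • v else 0)
    (hadj : ∀ (m : ℤ) (ψ φ : V), ⟪J m ψ, φ⟫_ℂ = ⟪ψ, J (-m) φ⟫_ℂ)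
    (hJ0 : ∀ v : V, J 0 v = 0)
    (hlf : ∀ v : V, ∃ N : ℤ, ∀ m : ℤ, N ≤ m → J m v = 0)
    {Ψ : V} {n : ℝ} (hΨ : sugawara J 0 Ψ = (n : ℂ) • Ψ) :
    ⟪Jminus J Ψ, Jminus J Ψ⟫_ℂ = (n : ℂ) * ⟪Ψ, Ψ⟫_ℂ := by
  obtain ⟨N₁, h₁⟩ := hlf Ψ
  set N := max 1 N₁ with hN
  have hN1 : (1:ℤ) ≤ N := le_max_left _ _
  have hb : ∀ m : ℤ, N ≤ m → J m Ψ = 0 := fun m hm => h₁ m (le_trans (le_max_right _ _) hm)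
  have eig : ∀ m ∈ Finset.Ioo (0:ℤ) N,
      sugawara J 0 (J m Ψ) = ((n - (m:ℝ) : ℝ) : ℂ) • J m Ψ := by
    intro m hm
    simp only [Finset.mem_Ioo] at hm
    have := eigen_shift hJJ hJ0 hlf hm.1 hΨ
    rw [this]
    norm_num
  rw [Jminus_eq Ψ N hb, sum_inner]
  have diag : ∀ m ∈ Finset.Ioo (0:ℤ) N,
      ⟪J m Ψ, ∑ k ∈ Finset.Ioo (0:ℤ) N, J k Ψ⟫_ℂ = ⟪Ψ, J (-m) (J m Ψ)⟫_ℂ := by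
    intro m hm
    rw [inner_sum]
    rw [Finset.sum_eq_single_of_mem m hm]
    · exact hadj m Ψ (J m Ψ)
    · intro k hk hkm
      simp only [Finset.mem_Ioo] at hm hk
      exact ortho hadj hJ0 hlf (a := n - (m:ℝ)) (b := n - (k:ℝ))
        (by intro hcon; apply hkm; have : (m:ℝ) = k := by linarith
            exact_mod_cast this.symm)
        (eig m (by simp only [Finset.mem_Ioo]; omega))
        (eig k (by simp only [Finset.mem_Ioo]; omega))
  rw [Finset.sum_congr rfl diag, ← inner_sum,
    ← sugawara_zero_eq hJ0 Ψ N hN1 hb, hΨ, inner_smul_right]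

end Main

/-- (i) `‖J₋Ψ‖² = n‖Ψ‖²` on the `n`-th eigenspace of `L₀`, and
(ii) `‖J₋Ψ‖ ≤ n‖Ψ‖` on the sum of the eigenspaces of `L₀` with eigenvalues
`0, 1, …, n`. -/
theorem stmt_11 {V : Type*} [NormedAddCommGroup V] [InnerProductSpace ℂ V]
    (J : ℤ → Module.End ℂ V) (Ω : V)
    (hJJ : ∀ m n : ℤ, ∀ v : V,
      J m (J n v) - J n (J m v) = if m + n = 0 then (m : ℂ) • v else 0)
    (hadj : ∀ (m : ℤ) (ψ φ : V), ⟪J m ψ, φ⟫_ℂ = ⟪ψ, J (-m) φ⟫_ℂ)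
    (hΩ : ‖Ω‖ = 1)
    (hΩann : ∀ n : ℤ, 0 ≤ n → J n Ω = 0)
    (hspan : Submodule.span ℂ
      {v : V | ∃ l : List ℕ, (∀ m ∈ l, 1 ≤ m) ∧
        v = (l.map fun m => J (-(m : ℤ))).prod Ω} = ⊤)
    (hlf : ∀ v : V, ∃ N : ℤ, ∀ m : ℤ, N ≤ m → J m v = 0)
    :
    (∀ (n : ℕ) (Ψ : V), sugawara J 0 Ψ = (n : ℂ) • Ψ →
      ‖Jminus J Ψ‖ ^ 2 = (n : ℝ) * ‖Ψ‖ ^ 2) ∧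
    (∀ (n : ℕ) (Ψ : V) (ψ : ℕ → V),
      (∀ k : ℕ, k ≤ n → sugawara J 0 (ψ k) = (k : ℂ) • ψ k) →
      Ψ = ∑ k ∈ Finset.range (n + 1), ψ k →
      ‖Jminus J Ψ‖ ≤ (n : ℝ) * ‖Ψ‖) := by
  classical
  have hJ0 : ∀ v : V, J 0 v = 0 := J0_zero hJJ hΩann hspan
  have parti : ∀ (n : ℕ) (Ψ : V), sugawara J 0 Ψ = (n : ℂ) • Ψ →
      ‖Jminus J Ψ‖ ^ 2 = (n : ℝ) * ‖Ψ‖ ^ 2 := by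
    intro n Ψ hΨ
    have h := part_i hJJ hadj hJ0 hlf (n := (n : ℝ)) (by exact_mod_cast hΨ)
    rw [inner_self_eq_norm_sq_to_K, inner_self_eq_norm_sq_to_K] at h
    have h' : ((‖Jminus J Ψ‖ ^ 2 : ℝ) : ℂ) = (((n : ℝ) * ‖Ψ‖ ^ 2 : ℝ) : ℂ) := by
      push_cast
      exact h
    exact_mod_cast h'
  refine ⟨parti, ?_⟩
  intro n Ψ ψ hψ hΨsum
  set s := Finset.range (n + 1) with hs_def
  have hJk : ∀ k : ℕ, k ≤ n → ‖Jminus J (ψ k)‖ = Real.sqrt k * ‖ψ k‖ := by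
    intro k hk
    have hr := parti k (ψ k) (hψ k hk)
    rw [← Real.sqrt_sq (norm_nonneg (Jminus J (ψ k))), hr,
      Real.sqrt_mul (by positivity), Real.sqrt_sq (norm_nonneg _)]
  have horth : ∀ j ∈ s, ∀ k ∈ s, j ≠ k → ⟪ψ j, ψ k⟫_ℂ = 0 := by
    intro j hj k hk hjk
    simp only [hs_def, Finset.mem_range] at hj hk
    exact ortho hadj hJ0 hlf (a := (j : ℝ)) (b := (k : ℝ))
      (by exact_mod_cast hjk)
      (by exact_mod_cast hψ j (by omega))
      (by exact_mod_cast hψ k (by omega))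
  have hnormsq : ‖Ψ‖ ^ 2 = ∑ k ∈ s, ‖ψ k‖ ^ 2 := by
    have h : ⟪Ψ, Ψ⟫_ℂ = ∑ k ∈ s, ⟪ψ k, ψ k⟫_ℂ := by
      rw [hΨsum, sum_inner]
      apply Finset.sum_congr rfl
      intro j hj
      rw [inner_sum, Finset.sum_eq_single_of_mem j hj]
      intro k hk hkj
      exact horth j hj k hk (Ne.symm hkj)
    simp only [inner_self_eq_norm_sq_to_K] at h
    exact_mod_cast h
  choose g hg using fun k : ℕ => hlf (ψ k)
  have hsne : s.Nonempty := ⟨0, by simp [hs_def]⟩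
  set N : ℤ := 1 ⊔ s.sup' hsne g with hNdef
  have hbd : ∀ k ∈ s, ∀ m : ℤ, N ≤ m → J m (ψ k) = 0 := by
    intro k hk m hm
    exact hg k m (le_trans (le_trans (Finset.le_sup' g hk) (le_max_right _ _)) hm)
  have hbΨ : ∀ m : ℤ, N ≤ m → J m Ψ = 0 := by
    intro m hm
    rw [hΨsum, map_sum]
    exact Finset.sum_eq_zero fun k hk => hbd k hk m hm
  have hJadd : Jminus J Ψ = ∑ k ∈ s, Jminus J (ψ k) := by
    rw [Jminus_eq Ψ N hbΨ]
    have hterm : ∀ k ∈ s, Jminus J (ψ k) = ∑ m ∈ Finset.Ioo (0:ℤ) N, J m (ψ k) :=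
      fun k hk => Jminus_eq (ψ k) N (hbd k hk)
    rw [Finset.sum_congr rfl hterm, Finset.sum_comm]
    apply Finset.sum_congr rfl
    intro m _
    rw [hΨsum, map_sum]
  have hA : (0:ℝ) ≤ ∑ k ∈ s, Real.sqrt k * ‖ψ k‖ :=
    Finset.sum_nonneg fun k _ => mul_nonneg (Real.sqrt_nonneg _) (norm_nonneg _)
  have hCS := Finset.sum_mul_sq_le_sq_mul_sq s (fun k => Real.sqrt k) (fun k => ‖ψ k‖)
  have hsq : ∀ k ∈ s, Real.sqrt (k:ℕ) ^ 2 = ((k:ℕ):ℝ) := fun k _ => Real.sq_sqrt (Nat.cast_nonneg k)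
  rw [Finset.sum_congr rfl hsq, ← hnormsq] at hCS
  have h2 : (∑ k ∈ s, ((k:ℕ):ℝ)) * 2 = ((n:ℝ) + 1) * n := by
    have h := Finset.sum_range_id_mul_two (n + 1)
    have h' : (((∑ i ∈ Finset.range (n+1), i) * 2 : ℕ) : ℝ) = (((n+1) * (n+1-1) : ℕ) : ℝ) := by
      exact_mod_cast congrArg (fun x : ℕ => (x : ℝ)) h
    push_cast [Nat.add_sub_cancel] at h'
    rw [← hs_def] at h'
    linarith [h']
  calc ‖Jminus J Ψ‖ ≤ ∑ k ∈ s, ‖Jminus J (ψ k)‖ := by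
        rw [hJadd]; exact norm_sum_le _ _
    _ = ∑ k ∈ s, Real.sqrt k * ‖ψ k‖ := by
        apply Finset.sum_congr rfl
        intro k hk
        simp only [hs_def, Finset.mem_range] at hk
        exact hJk k (by omega)
    _ ≤ (n:ℝ) * ‖Ψ‖ := by
        have hn : (0:ℝ) ≤ n := Nat.cast_nonneg n
        have hΨn : (0:ℝ) ≤ ‖Ψ‖ := norm_nonneg Ψ
        have hn2 : (∑ k ∈ s, ((k:ℕ):ℝ)) ≤ (n:ℝ)^2 := by
          rcases Nat.eq_zero_or_pos n with h0 | h1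
          · subst h0; simp [hs_def]
          · have : (1:ℝ) ≤ n := by exact_mod_cast h1
            nlinarith [h2]
        nlinarith [hCS, sq_nonneg ((n:ℝ) * ‖Ψ‖ - ∑ k ∈ s, Real.sqrt k * ‖ψ k‖),
          sq_nonneg ((n:ℝ) * ‖Ψ‖ + ∑ k ∈ s, Real.sqrt k * ‖ψ k‖),
          mul_nonneg hn hΨn]
end

section
/- Let V, (J_n)_{n∈ℤ}, Ω be the vacuum representation of the U(1)-current algebra and let (L_n)_{n∈ℤ} be the associated Sugawara operators. For every n ∈ ℕ and every Ψ ∈ V with L_0 Ψ = nΨ, one has ‖Σ_{k=1}^{n} k·J_k Ψ‖² ≤ n³·‖Ψ‖² (note J_k Ψ = 0 for k > n). -/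
open scoped InnerProductSpace

section Aux

variable {V : Type*}

lemma sugawara_zero_eq_sum [AddCommGroup V] [Module ℂ V] (J : ℤ → Module.End ℂ V)
    (v : V) (M : ℤ) (hM : 0 ≤ M) (hv : ∀ m : ℤ, M ≤ m → J m v = 0) :
    sugawara J 0 v = ((1 : ℂ) / 2) •
      ∑ k ∈ Finset.Icc (-M) M,
        (if -1 < k then J (0 - k) (J k v) else J k (J (0 - k) v)) := by
  unfold sugawara
  congr 1
  apply finsum_eq_sum_of_support_subset
  intro k hk
  simp only [Function.mem_support] at hk
  simp only [Finset.coe_Icc, Set.mem_Icc]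
  by_cases h : -1 < k
  · rw [if_pos h] at hk
    by_contra hc
    push_neg at hc
    have : M ≤ k := by omega
    rw [hv k this, map_zero] at hk
    exact hk rfl
  · rw [if_neg h] at hk
    by_contra hc
    push_neg at hc
    have : M ≤ 0 - k := by omega
    rw [hv _ this, map_zero] at hk
    exact hk rfl

lemma sugawara_zero_symm [NormedAddCommGroup V] [InnerProductSpace ℂ V]
    (J : ℤ → Module.End ℂ V)
    (hadj : ∀ (m : ℤ) (ψ φ : V), ⟪J m ψ, φ⟫_ℂ = ⟪ψ, J (-m) φ⟫_ℂ)
    (hlf : ∀ v : V, ∃ N : ℤ, ∀ m : ℤ, N ≤ m → J m v = 0)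
    (x y : V) : ⟪sugawara J 0 x, y⟫_ℂ = ⟪x, sugawara J 0 y⟫_ℂ := by
  obtain ⟨Nx, hNx⟩ := hlf x
  obtain ⟨Ny, hNy⟩ := hlf y
  set M : ℤ := max (max Nx Ny) 0 with hMdef
  have hM : 0 ≤ M := le_max_right _ _
  rw [sugawara_zero_eq_sum J x M hM
        (fun m hm => hNx m (le_trans (le_trans (le_max_left _ _) (le_max_left _ _)) hm)),
      sugawara_zero_eq_sum J y M hM
        (fun m hm => hNy m (le_trans (le_trans (le_max_right _ _) (le_max_left _ _)) hm)),
      inner_smul_left, inner_smul_right, sum_inner, inner_sum]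
  congr 1
  · rw [show ((1 : ℂ) / 2) = ((1 / 2 : ℝ) : ℂ) by norm_num, Complex.conj_ofReal]
  apply Finset.sum_congr rfl
  intro k _
  by_cases h : -1 < k
  · rw [if_pos h, if_pos h, hadj (0 - k), hadj k]
    norm_num
  · rw [if_neg h, if_neg h, hadj k, hadj (0 - k)]
    norm_num

lemma sugawara_zero_comm [NormedAddCommGroup V] [InnerProductSpace ℂ V]
    (J : ℤ → Module.End ℂ V)
    (hJJ : ∀ m n : ℤ, ∀ v : V,
      J m (J n v) - J n (J m v) = if m + n = 0 then (m : ℂ) • v else 0)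
    (hlf : ∀ v : V, ∃ N : ℤ, ∀ m : ℤ, N ≤ m → J m v = 0)
    (m : ℤ) (hm : 1 ≤ m) (v : V) :
    sugawara J 0 (J m v) = J m (sugawara J 0 v) - (m : ℂ) • J m v := by
  have comm : ∀ a b : ℤ, ∀ w : V,
      J a (J b w) = J b (J a w) + (if a + b = 0 then (a : ℂ) • w else 0) := by
    intro a b w
    have := hJJ a b w
    linear_combination (norm := module) this
  obtain ⟨N, hN⟩ := hlf v
  obtain ⟨N', hN'⟩ := hlf (J m v)
  set M : ℤ := max (max N N') m with hMdef
  have hMm : m ≤ M := le_max_right _ _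
  have hM0 : 0 ≤ M := le_trans (by omega) hMm
  rw [sugawara_zero_eq_sum J (J m v) M hM0
        (fun k hk => hN' k (le_trans (le_trans (le_max_right _ _) (le_max_left _ _)) hk)),
      sugawara_zero_eq_sum J v M hM0
        (fun k hk => hN k (le_trans (le_trans (le_max_left _ _) (le_max_left _ _)) hk)),
      map_smul, map_sum]
  have key : ∀ k ∈ Finset.Icc (-M) M,
      (if -1 < k then J (0 - k) (J k (J m v)) else J k (J (0 - k) (J m v)))
        = J m (if -1 < k then J (0 - k) (J k v) else J k (J (0 - k) v))
          + ((if k = m then (-(m : ℂ)) • J m v else 0)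
            + (if k = -m then (-(m : ℂ)) • J m v else 0)) := by
    intro k _
    by_cases h : -1 < k
    · rw [if_pos h, if_pos h, if_neg (by omega : ¬ k = -m), add_zero,
        comm k m v, if_neg (by omega : ¬ k + m = 0), add_zero,
        comm (0 - k) m (J k v)]
      congr 1
      by_cases hkm : k = m
      · subst hkm
        rw [if_pos (by ring), if_pos rfl]
        congr 1
        push_cast
        ring
      · rw [if_neg (by omega), if_neg hkm]
    · rw [if_neg h, if_neg h, if_neg (by omega : ¬ k = m), zero_add,
        comm (0 - k) m v, if_neg (by omega : ¬ (0 - k) + m = 0), add_zero,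
        comm k m (J (0 - k) v)]
      congr 1
      by_cases hkm : k = -m
      · subst hkm
        rw [if_pos (by ring), if_pos rfl]
        have h0 : (0 : ℤ) - -m = m := by ring
        rw [h0]
        congr 1
        push_cast
        ring
      · rw [if_neg (by omega), if_neg hkm]
  rw [Finset.sum_congr rfl key, Finset.sum_add_distrib, Finset.sum_add_distrib,
    Finset.sum_ite_eq' _ m, Finset.sum_ite_eq' _ (-m),
    if_pos (by rw [Finset.mem_Icc]; omega : m ∈ Finset.Icc (-M) M),
    if_pos (by rw [Finset.mem_Icc]; omega : -m ∈ Finset.Icc (-M) M)]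
  match_scalars <;> ring

end Aux

/-- `‖Σ_{k=1}^n k·J_k Ψ‖² ≤ n³‖Ψ‖²` on the `n`-th eigenspace of
`L₀` in the vacuum representation of the U(1)-current algebra. -/
theorem stmt_12 {V : Type*} [NormedAddCommGroup V] [InnerProductSpace ℂ V]
    (J : ℤ → Module.End ℂ V) (Ω : V)
    (hJJ : ∀ m n : ℤ, ∀ v : V,
      J m (J n v) - J n (J m v) = if m + n = 0 then (m : ℂ) • v else 0)
    (hadj : ∀ (m : ℤ) (ψ φ : V), ⟪J m ψ, φ⟫_ℂ = ⟪ψ, J (-m) φ⟫_ℂ)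
    (hΩ : ‖Ω‖ = 1)
    (hΩann : ∀ n : ℤ, 0 ≤ n → J n Ω = 0)
    (hspan : Submodule.span ℂ
      {v : V | ∃ l : List ℕ, (∀ m ∈ l, 1 ≤ m) ∧
        v = (l.map fun m => J (-(m : ℤ))).prod Ω} = ⊤)
    (hlf : ∀ v : V, ∃ N : ℤ, ∀ m : ℤ, N ≤ m → J m v = 0)
    (n : ℕ) (Ψ : V) (hΨ : sugawara J 0 Ψ = (n : ℂ) • Ψ) :
    ‖∑ k ∈ Finset.Icc 1 n, (k : ℂ) • J (k : ℤ) Ψ‖ ^ 2 ≤ (n : ℝ) ^ 3 * ‖Ψ‖ ^ 2 := by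
  classical
  -- eigenvalue of J k Ψ
  have heig : ∀ k : ℕ, 1 ≤ k →
      sugawara J 0 (J (k : ℤ) Ψ) = ((n : ℂ) - (k : ℂ)) • J (k : ℤ) Ψ := by
    intro k hk
    rw [sugawara_zero_comm J hJJ hlf (k : ℤ) (by exact_mod_cast hk) Ψ, hΨ, map_smul]
    module
  -- orthogonality
  have horth : ∀ j ∈ Finset.Icc 1 n, ∀ k ∈ Finset.Icc 1 n, j ≠ k →
      ⟪J (j : ℤ) Ψ, J (k : ℤ) Ψ⟫_ℂ = 0 := by
    intro j hj k hk hjk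
    have h1 := sugawara_zero_symm J hadj hlf (J (j : ℤ) Ψ) (J (k : ℤ) Ψ)
    rw [heig j (Finset.mem_Icc.mp hj).1, heig k (Finset.mem_Icc.mp hk).1,
      inner_smul_left, inner_smul_right] at h1
    have hconj : (starRingEnd ℂ) ((n : ℂ) - (j : ℂ)) = (n : ℂ) - (j : ℂ) := by
      simp
    rw [hconj] at h1
    have h2 : (((k : ℂ) - (j : ℂ))) * ⟪J (j : ℤ) Ψ, J (k : ℤ) Ψ⟫_ℂ = 0 := by
      linear_combination h1
    rcases mul_eq_zero.mp h2 with h | h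
    · exfalso
      apply hjk
      have : (j : ℂ) = (k : ℂ) := by linear_combination -h
      exact_mod_cast this
    · exact h
  have hself : ∀ x : V, (⟪x, x⟫_ℂ).re = ‖x‖ ^ 2 := fun x => by
    rw [inner_self_eq_norm_sq_to_K]; norm_cast
  -- Fact 1 : Σ ‖J k Ψ‖² ≤ n ‖Ψ‖²
  have fact1 : ∑ k ∈ Finset.Icc 1 n, ‖J (k : ℤ) Ψ‖ ^ 2 ≤ (n : ℝ) * ‖Ψ‖ ^ 2 := by
    obtain ⟨N, hN⟩ := hlf Ψ
    set M : ℤ := max N ((n : ℤ) + 1) with hMdef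
    have hMn : (n : ℤ) + 1 ≤ M := le_max_right _ _
    have hM0 : 0 ≤ M := by omega
    have hsum := sugawara_zero_eq_sum J Ψ M hM0 (fun m hm => hN m (le_trans (le_max_left _ _) hm))
    have hterm : ∀ k : ℤ,
        (⟪Ψ, (if -1 < k then J (0 - k) (J k Ψ) else J k (J (0 - k) Ψ))⟫_ℂ).re
          = if -1 < k then ‖J k Ψ‖ ^ 2 else ‖J (0 - k) Ψ‖ ^ 2 := by
      intro k
      by_cases h : -1 < k
      · rw [if_pos h, if_pos h]
        have e := hadj (-(0 - k)) Ψ (J k Ψ)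
        simp only [neg_neg] at e
        rw [← e]
        have hk : -(0 - k) = k := by ring
        rw [hk, inner_self_eq_norm_sq_to_K]
        norm_cast
      · rw [if_neg h, if_neg h]
        have e := hadj (-k) Ψ (J (0 - k) Ψ)
        simp only [neg_neg] at e
        rw [← e]
        have hk : -k = 0 - k := by ring
        rw [hk, inner_self_eq_norm_sq_to_K]
        norm_cast
    have hkey : (n : ℝ) * ‖Ψ‖ ^ 2 = (1 / 2) * ∑ k ∈ Finset.Icc (-M) M,
        (⟪Ψ, (if -1 < k then J (0 - k) (J k Ψ) else J k (J (0 - k) Ψ))⟫_ℂ).re := by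
      have h1 : ⟪Ψ, sugawara J 0 Ψ⟫_ℂ = ((1 : ℂ) / 2) * ∑ k ∈ Finset.Icc (-M) M,
          ⟪Ψ, (if -1 < k then J (0 - k) (J k Ψ) else J k (J (0 - k) Ψ))⟫_ℂ := by
        rw [hsum, inner_smul_right, inner_sum]
      have h2 : (⟪Ψ, sugawara J 0 Ψ⟫_ℂ).re = (n : ℝ) * ‖Ψ‖ ^ 2 := by
        rw [hΨ, inner_smul_right, ← Complex.ofReal_natCast, Complex.re_ofReal_mul, hself]
      rw [← h2, h1]
      rw [show ((1 : ℂ) / 2) = ((1 / 2 : ℝ) : ℂ) by norm_num, Complex.re_ofReal_mul,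
        Complex.re_sum]
    -- lower bound the big sum by the sum over Icc 1 n and Icc (-n) (-1)
    set r : ℤ → ℝ := fun k =>
      (⟪Ψ, (if -1 < k then J (0 - k) (J k Ψ) else J k (J (0 - k) Ψ))⟫_ℂ).re with hrdef
    have hrnn : ∀ k : ℤ, 0 ≤ r k := by
      intro k
      rw [hrdef]
      simp only
      rw [hterm k]
      split <;> positivity
    have hsub : Finset.Icc (1 : ℤ) (n : ℤ) ∪ Finset.Icc (-(n : ℤ)) (-1) ⊆
        Finset.Icc (-M) M := by
      intro k hk
      simp only [Finset.mem_union, Finset.mem_Icc] at hk ⊢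
      omega
    have hdisj : Disjoint (Finset.Icc (1 : ℤ) (n : ℤ)) (Finset.Icc (-(n : ℤ)) (-1)) := by
      rw [Finset.disjoint_left]
      intro k hk hk'
      simp only [Finset.mem_Icc] at hk hk'
      omega
    have hle : ∑ k ∈ Finset.Icc (1 : ℤ) (n : ℤ) ∪ Finset.Icc (-(n : ℤ)) (-1), r k ≤
        ∑ k ∈ Finset.Icc (-M) M, r k :=
      Finset.sum_le_sum_of_subset_of_nonneg hsub (fun k _ _ => hrnn k)
    rw [Finset.sum_union hdisj] at hle
    have hpos : ∑ k ∈ Finset.Icc (1 : ℤ) (n : ℤ), r k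
        = ∑ k ∈ Finset.Icc 1 n, ‖J (k : ℤ) Ψ‖ ^ 2 := by
      apply Finset.sum_nbij' (i := fun k : ℤ => k.toNat) (j := fun k : ℕ => (k : ℤ))
      · intro a ha; simp only [Finset.mem_Icc] at ha ⊢; omega
      · intro a ha; simp only [Finset.mem_Icc] at ha ⊢; omega
      · intro a ha; simp only [Finset.mem_Icc] at ha; omega
      · intro a ha; simp only [Finset.mem_Icc] at ha; omega
      · intro a ha
        simp only [Finset.mem_Icc] at ha
        rw [hrdef]
        simp only
        rw [hterm a, if_pos (by omega)]
        rw [show ((a.toNat : ℕ) : ℤ) = a from by omega]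
    have hneg : ∑ k ∈ Finset.Icc (-(n : ℤ)) (-1), r k
        = ∑ k ∈ Finset.Icc 1 n, ‖J (k : ℤ) Ψ‖ ^ 2 := by
      apply Finset.sum_nbij' (i := fun k : ℤ => (-k).toNat) (j := fun k : ℕ => (-(k : ℤ)))
      · intro a ha; simp only [Finset.mem_Icc] at ha ⊢; omega
      · intro a ha; simp only [Finset.mem_Icc] at ha ⊢; omega
      · intro a ha; simp only [Finset.mem_Icc] at ha; omega
      · intro a ha; simp only [Finset.mem_Icc] at ha; omega
      · intro a ha
        simp only [Finset.mem_Icc] at ha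
        rw [hrdef]
        simp only
        rw [hterm a, if_neg (by omega)]
        rw [show (((-a).toNat : ℕ) : ℤ) = 0 - a from by omega]
    rw [hpos, hneg] at hle
    rw [hkey]
    linarith
  -- norm squared of the sum
  have hnormsq : ‖∑ k ∈ Finset.Icc 1 n, (k : ℂ) • J (k : ℤ) Ψ‖ ^ 2
      = ∑ k ∈ Finset.Icc 1 n, (k : ℝ) ^ 2 * ‖J (k : ℤ) Ψ‖ ^ 2 := by
    have hre : (⟪∑ k ∈ Finset.Icc 1 n, (k : ℂ) • J (k : ℤ) Ψ,
          ∑ k ∈ Finset.Icc 1 n, (k : ℂ) • J (k : ℤ) Ψ⟫_ℂ).re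
        = ∑ k ∈ Finset.Icc 1 n, (k : ℝ) ^ 2 * ‖J (k : ℤ) Ψ‖ ^ 2 := by
      rw [sum_inner, Complex.re_sum]
      apply Finset.sum_congr rfl
      intro j hj
      rw [inner_smul_left, inner_sum]
      rw [Finset.sum_eq_single_of_mem j hj (fun k hk hkj => by
        rw [inner_smul_right, horth j hj k hk (Ne.symm hkj), mul_zero])]
      rw [inner_smul_right, Complex.conj_natCast, ← mul_assoc,
        ← Complex.ofReal_natCast, ← Complex.ofReal_mul, Complex.re_ofReal_mul, hself]
      ring
    rw [← hself, hre]
  rw [hnormsq]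
  have hstep : ∑ k ∈ Finset.Icc 1 n, (k : ℝ) ^ 2 * ‖J (k : ℤ) Ψ‖ ^ 2
      ≤ (n : ℝ) ^ 2 * ∑ k ∈ Finset.Icc 1 n, ‖J (k : ℤ) Ψ‖ ^ 2 := by
    rw [Finset.mul_sum]
    apply Finset.sum_le_sum
    intro k hk
    have hkn : (k : ℝ) ≤ (n : ℝ) := by
      exact_mod_cast (Finset.mem_Icc.mp hk).2
    have hk0 : (0 : ℝ) ≤ (k : ℝ) := by positivity
    have : (k : ℝ) ^ 2 ≤ (n : ℝ) ^ 2 := by nlinarith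
    nlinarith [sq_nonneg ‖J (k : ℤ) Ψ‖]
  calc ∑ k ∈ Finset.Icc 1 n, (k : ℝ) ^ 2 * ‖J (k : ℤ) Ψ‖ ^ 2
      ≤ (n : ℝ) ^ 2 * ∑ k ∈ Finset.Icc 1 n, ‖J (k : ℤ) Ψ‖ ^ 2 := hstep
    _ ≤ (n : ℝ) ^ 2 * ((n : ℝ) * ‖Ψ‖ ^ 2) := by
        apply mul_le_mul_of_nonneg_left fact1 (by positivity)
    _ = (n : ℝ) ^ 3 * ‖Ψ‖ ^ 2 := by ring
end
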